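/- arXiv:2510.07013 — 12 statements merged into one kernel-verified Lean document; each statement's English description precedes it below -/
import Mathlib

section
/- Let g : [0,∞) → [0,∞) be increasing, α-Lipschitz, with g(0)=0, and define ξ(u,v) = g(u) − g(v) for 0 ≤ v ≤ u. Then ξ belongs to 𝓑(α). Moreover, if b ≥ 0 satisfies g(b) = 0, and β ∈ 𝓑(α) satisfies β(u,b) − β(v,b) ≥ g(u) − g(v) for all b ≤ v ≤ u, then β(u,v) ≥ ξ(u,v) for all (u,v) ∈ Δ. -/
open Set Filter

/-- The space `𝓑`: functions on `Δ = {(u,v) : 0 ≤ v ≤ u}` with `ψ(u,u)=0`, nonnegative,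
subadditive, increasing in the first variable and decreasing in the second. -/
def MemB (ψ : ℝ → ℝ → ℝ) : Prop :=
  (∀ u, 0 ≤ u → ψ u u = 0) ∧
  (∀ u v, 0 ≤ v → v ≤ u → 0 ≤ ψ u v) ∧
  (∀ u w v, 0 ≤ v → v ≤ w → w ≤ u → ψ u v ≤ ψ u w + ψ w v) ∧
  (∀ u w v, 0 ≤ v → v ≤ w → w ≤ u → ψ w v ≤ ψ u v) ∧
  (∀ u w v, 0 ≤ v → v ≤ w → w ≤ u → ψ u w ≤ ψ u v)

/-- The space `𝓑(α)`: members of `𝓑` which are `α`-Lipschitz for the `L¹` metric on `Δ`. -/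
def MemBLip (α : ℝ) (ψ : ℝ → ℝ → ℝ) : Prop :=
  MemB ψ ∧ ∀ u v u' v', 0 ≤ v → v ≤ u → 0 ≤ v' → v' ≤ u' →
    |ψ u v - ψ u' v'| ≤ α * (|u - u'| + |v - v'|)

/-- The space `𝓑̄_h(α)`: members of `𝓑(α)` which are increasing along diagonals and whose
restriction to the bottom edge grows at least at rate `h`. -/
def MemBbar (h α : ℝ) (ψ : ℝ → ℝ → ℝ) : Prop :=
  MemBLip α ψ ∧
  (∀ u v z, 0 ≤ v → v ≤ u → 0 ≤ z → ψ u v ≤ ψ (u + z) (v + z)) ∧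
  (∀ u v, 0 ≤ v → v ≤ u → h * (u - v) ≤ ψ u 0 - ψ v 0)

/-- The space `𝓖`: decreasing nonnegative functions on `[0,1]` vanishing at `1` with
`γ(λθ) ≤ γ(θ) + θγ(λ)`. -/
def MemG (γ : ℝ → ℝ) : Prop :=
  γ 1 = 0 ∧ (∀ θ, 0 ≤ θ → θ ≤ 1 → 0 ≤ γ θ) ∧
  (∀ a b, 0 ≤ a → a ≤ b → b ≤ 1 → γ b ≤ γ a) ∧
  (∀ l t, 0 ≤ l → l ≤ 1 → 0 ≤ t → t ≤ 1 → γ (l * t) ≤ γ t + t * γ l)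

/-- The space `𝓖(α)`: `α`-Lipschitz members of `𝓖`. -/
def MemGLip (α : ℝ) (γ : ℝ → ℝ) : Prop :=
  MemG γ ∧ ∀ a b, 0 ≤ a → a ≤ 1 → 0 ≤ b → b ≤ 1 → |γ a - γ b| ≤ α * |a - b|

/-- The space `𝓖̄_h(α)`: members of `𝓖(α)` with `γ(0) ≥ h` and `θ ↦ γ(θ)/(1-θ)` increasing. -/
def MemGbar (h α : ℝ) (γ : ℝ → ℝ) : Prop :=
  MemGLip α γ ∧ h ≤ γ 0 ∧
  ∀ a b, 0 ≤ a → a ≤ b → b < 1 → γ a / (1 - a) ≤ γ b / (1 - b)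

/-- The normalized limit `Γ(ψ)(θ) = limsup_{u→∞} ψ(u,θu)/u`. -/
noncomputable def Gam (ψ : ℝ → ℝ → ℝ) (θ : ℝ) : ℝ :=
  Filter.limsup (fun u => ψ u (θ * u) / u) Filter.atTop

/-- The projection `Φ_h(β)(u,v) = max_{0 ≤ z ≤ u}` of `β(u-z,v-z)` for `z ≤ v` and
`h(z-v) + β(u-z,0)` for `v ≤ z ≤ u`. -/
noncomputable def Phi (h : ℝ) (β : ℝ → ℝ → ℝ) (u v : ℝ) : ℝ :=
  sSup ((fun z => if z ≤ v then β (u - z) (v - z) else h * (z - v) + β (u - z) 0) ''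
    Set.Icc 0 u)

/-- The projection `Ω_h(γ)(θ) = (1-θ)·max{h, max_{0 ≤ λ ≤ θ} γ(λ)/(1-λ)}`. -/
noncomputable def Om (h : ℝ) (γ : ℝ → ℝ) (θ : ℝ) : ℝ :=
  (1 - θ) * max h (sSup ((fun l => γ l / (1 - l)) '' Set.Icc 0 θ))

/-- The space `𝓒(α)`: increasing `α`-Lipschitz functions `g : [0,∞) → [0,∞)` with `g(0)=0`. -/
def MemC (α : ℝ) (g : ℝ → ℝ) : Prop :=
  g 0 = 0 ∧ (∀ u, 0 ≤ u → 0 ≤ g u) ∧ (∀ a b, 0 ≤ a → a ≤ b → g a ≤ g b) ∧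
  (∀ a b, 0 ≤ a → 0 ≤ b → |g a - g b| ≤ α * |a - b|)

lemma MemC.monotoneOn {α : ℝ} {g : ℝ → ℝ} (hg : MemC α g) : MonotoneOn g (Ici 0) :=
  fun a ha b _ hab => hg.2.2.1 a b ha hab

lemma memB_sub_of_monotoneOn {g : ℝ → ℝ} (hg : MonotoneOn g (Ici 0)) :
    MemB (fun u v => g u - g v) := by
  refine ⟨fun u _ => sub_self _, fun u v hv hvu => ?_, fun u w v _ _ _ => ?_,
    fun u w v hv hvw hwu => ?_, fun u w v hv hvw hwu => ?_⟩
  · exact sub_nonneg.2 (hg hv (hv.trans hvu) hvu)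
  · exact (sub_add_sub_cancel (g u) (g w) (g v)).ge
  · exact sub_le_sub_right (hg (hv.trans hvw) (hv.trans (hvw.trans hwu)) hwu) _
  · exact sub_le_sub_left (hg hv (hv.trans hvw) hvw) _

lemma memBLip_sub_of_memC {α : ℝ} {g : ℝ → ℝ} (hg : MemC α g) :
    MemBLip α (fun u v => g u - g v) := by
  refine ⟨memB_sub_of_monotoneOn hg.monotoneOn, fun u v u' v' hv hvu hv' hv'u' => ?_⟩
  calc |g u - g v - (g u' - g v')| = |(g u - g u') - (g v - g v')| := by ring_nf
    _ ≤ |g u - g u'| + |g v - g v'| := abs_sub _ _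
    _ ≤ α * |u - u'| + α * |v - v'| :=
        add_le_add (hg.2.2.2 u u' (hv.trans hvu) (hv'.trans hv'u')) (hg.2.2.2 v v' hv hv')
    _ = α * (|u - u'| + |v - v'|) := by ring

/- For `b ≤ v` this is the triangle inequality `β(u,b) ≤ β(u,v) + β(v,b)`. For `v < b` the function
`g` vanishes on `[0,b]`, so `g(u) - g(v) = g(u) - g(b) ≤ β(u,b) ≤ β(u,v)` when `b < u`. -/
theorem sub_le_of_memB {g : ℝ → ℝ} {β : ℝ → ℝ → ℝ} {b : ℝ} (hg : MonotoneOn g (Ici 0))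
    (hg_nonneg : ∀ x, 0 ≤ x → 0 ≤ g x) (hb : 0 ≤ b) (hgb : g b = 0) (hβ : MemB β)
    (hβg : ∀ v u, b ≤ v → v ≤ u → g u - g v ≤ β u b - β v b) {u v : ℝ} (hv : 0 ≤ v)
    (hvu : v ≤ u) : g u - g v ≤ β u v := by
  obtain ⟨hβ_diag, hβ_nonneg, hβ_triangle, -, hβ_anti⟩ := hβ
  have hg_zero : ∀ x, 0 ≤ x → x ≤ b → g x = 0 := fun x hx hxb =>
    le_antisymm (hgb ▸ hg hx hb hxb) (hg_nonneg x hx)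
  rcases le_total b v with hbv | hvb
  · linarith [hβ_triangle u v b hb hbv hvu, hβg v u hbv hvu]
  rcases le_total u b with hub | hbu
  · linarith [hg_zero u (hv.trans hvu) hub, hg_zero v hv hvb, hβ_nonneg u v hv hvu]
  · linarith [hg_zero v hv hvb, hβg b u le_rfl hbu, hβ_diag b hb, hβ_anti u b v hv hvb hbu]

theorem minimal_extension_general (α : ℝ) (g : ℝ → ℝ) (hg : MemC α g) :
    MemBLip α (fun u v => g u - g v) ∧
    ∀ b : ℝ, 0 ≤ b → g b = 0 → ∀ β : ℝ → ℝ → ℝ, MemBLip α β →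
      (∀ v u, b ≤ v → v ≤ u → g u - g v ≤ β u b - β v b) →
      ∀ u v, 0 ≤ v → v ≤ u → g u - g v ≤ β u v :=
  ⟨memBLip_sub_of_memC hg, fun _ hb hgb _ hβ hβg _ _ hv hvu =>
    sub_le_of_memB hg.monotoneOn hg.2.1 hb hgb hβ.1 hβg hv hvu⟩

/-- The minimal extension `ξ(u,v) = g(u) - g(v)` of `g ∈ 𝓒(α)` lies in `𝓑(α)`; moreover if
`g(b) = 0` and `β ∈ 𝓑(α)` satisfies `β(u,b) - β(v,b) ≥ g(u) - g(v)` for all `b ≤ v ≤ u`,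
then `β ≥ ξ` on `Δ`. -/
theorem minimal_extension (α : ℝ) (hα : 0 ≤ α) (g : ℝ → ℝ) (hg : MemC α g) :
    MemBLip α (fun u v => g u - g v) ∧
    ∀ b : ℝ, 0 ≤ b → g b = 0 → ∀ β : ℝ → ℝ → ℝ, MemBLip α β →
      (∀ v u, b ≤ v → v ≤ u → g u - g v ≤ β u b - β v b) →
      ∀ u v, 0 ≤ v → v ≤ u → g u - g v ≤ β u v :=
  minimal_extension_general α g hg
end

section
/- Let η : [0,∞) → [0,∞) be increasing, α ≥ 0, and suppose β ∈ 𝓑 satisfies β(u,v) ≤ α(u−v) + η(u) for all (u,v) ∈ Δ. Then there exists ψ ∈ 𝓑(α) such that β(u,v) − η(u) ≤ ψ(u,v) ≤ β(u,v) + η(u) for all (u,v) ∈ Δ. -/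
open Set Filter

/-- Inner inf-convolution in the first variable. -/
noncomputable def psiAux (α : ℝ) (β : ℝ → ℝ → ℝ) (u y : ℝ) : ℝ :=
  sInf ((fun t => β t y + α * (u - t)) '' Set.Icc y u)

/-- Outer sup-convolution in the second variable. -/
noncomputable def psiReg (α : ℝ) (β : ℝ → ℝ → ℝ) (u v : ℝ) : ℝ :=
  sSup ((fun y => psiAux α β u y - α * (v - y)) '' Set.Icc 0 v)

section psiLemmas

variable {α : ℝ} {β : ℝ → ℝ → ℝ} {η : ℝ → ℝ}

lemma psiAux_bddBelow (hα : 0 ≤ α) (hβ : MemB β) {u y : ℝ} (hy : 0 ≤ y) :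
    BddBelow ((fun t => β t y + α * (u - t)) '' Set.Icc y u) := by
  refine ⟨0, ?_⟩
  rintro x ⟨t, ht, rfl⟩
  have h1 : 0 ≤ β t y := hβ.2.1 t y hy ht.1
  have h2 : 0 ≤ α * (u - t) := mul_nonneg hα (by linarith [ht.2])
  dsimp; linarith

lemma psiAux_nonneg (hα : 0 ≤ α) (hβ : MemB β) {u y : ℝ} (hy : 0 ≤ y) (hyu : y ≤ u) :
    0 ≤ psiAux α β u y := by
  refine le_csInf ((Set.nonempty_Icc.mpr hyu).image _) ?_
  rintro x ⟨t, ht, rfl⟩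
  have h1 : 0 ≤ β t y := hβ.2.1 t y hy ht.1
  have h2 : 0 ≤ α * (u - t) := mul_nonneg hα (by linarith [ht.2])
  dsimp; linarith

lemma psiAux_le_beta (hα : 0 ≤ α) (hβ : MemB β) {u y : ℝ} (hy : 0 ≤ y) (hyu : y ≤ u) :
    psiAux α β u y ≤ β u y := by
  have := csInf_le (psiAux_bddBelow hα hβ hy) (⟨u, Set.right_mem_Icc.mpr hyu, rfl⟩ :
    β u y + α * (u - u) ∈ (fun t => β t y + α * (u - t)) '' Set.Icc y u)
  simpa [psiAux] using this

lemma psiAux_le_lin (hα : 0 ≤ α) (hβ : MemB β) {u y : ℝ} (hy : 0 ≤ y) (hyu : y ≤ u) :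
    psiAux α β u y ≤ α * (u - y) := by
  have := csInf_le (psiAux_bddBelow hα hβ hy) (⟨y, Set.left_mem_Icc.mpr hyu, rfl⟩ :
    β y y + α * (u - y) ∈ (fun t => β t y + α * (u - t)) '' Set.Icc y u)
  simpa [psiAux, hβ.1 y hy] using this

lemma psiAux_ge (hα : 0 ≤ α) (hβ : MemB β)
    (hbd : ∀ u v, 0 ≤ v → v ≤ u → β u v ≤ α * (u - v) + η u)
    {u y : ℝ} (hy : 0 ≤ y) (hyu : y ≤ u) :
    β u y - η u ≤ psiAux α β u y := by
  refine le_csInf ((Set.nonempty_Icc.mpr hyu).image _) ?_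
  rintro x ⟨t, ht, rfl⟩
  have h1 : β u y ≤ β u t + β t y := hβ.2.2.1 u t y hy ht.1 ht.2
  have h2 : β u t ≤ α * (u - t) + η u := hbd u t (le_trans hy ht.1) ht.2
  dsimp; linarith

lemma psiAux_mono_u (hα : 0 ≤ α) (hβ : MemB β) {u u' y : ℝ} (hy : 0 ≤ y) (hyu : y ≤ u)
    (huu : u ≤ u') : psiAux α β u y ≤ psiAux α β u' y := by
  refine le_csInf ((Set.nonempty_Icc.mpr (le_trans hyu huu)).image _) ?_
  rintro x ⟨t, ht, rfl⟩
  dsimp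
  rcases le_total t u with h | h
  · have := csInf_le (psiAux_bddBelow hα hβ hy) (⟨t, ⟨ht.1, h⟩, rfl⟩ :
      β t y + α * (u - t) ∈ (fun t => β t y + α * (u - t)) '' Set.Icc y u)
    have h2 : α * (u - t) ≤ α * (u' - t) := by
      apply mul_le_mul_of_nonneg_left (by linarith) hα
    unfold psiAux; linarith
  · have h1 : psiAux α β u y ≤ β u y := psiAux_le_beta hα hβ hy hyu
    have h2 : β u y ≤ β t y := hβ.2.2.2.1 t u y hy hyu h
    have h3 : 0 ≤ α * (u' - t) := mul_nonneg hα (by linarith [ht.2])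
    linarith

lemma psiAux_lip_u (hα : 0 ≤ α) (hβ : MemB β) {u u' y : ℝ} (hy : 0 ≤ y) (hyu : y ≤ u)
    (huu : u ≤ u') : psiAux α β u' y ≤ psiAux α β u y + α * (u' - u) := by
  have key : psiAux α β u' y - α * (u' - u) ≤ psiAux α β u y := by
    refine le_csInf ((Set.nonempty_Icc.mpr hyu).image _) ?_
    rintro x ⟨t, ht, rfl⟩
    have := csInf_le (psiAux_bddBelow hα hβ hy) (⟨t, ⟨ht.1, le_trans ht.2 huu⟩, rfl⟩ :
      β t y + α * (u' - t) ∈ (fun t => β t y + α * (u' - t)) '' Set.Icc y u')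
    dsimp at this ⊢
    unfold psiAux; nlinarith [this]
  linarith

lemma psiAux_anti_y (hα : 0 ≤ α) (hβ : MemB β) {u y y' : ℝ} (hy : 0 ≤ y) (hyy : y ≤ y')
    (hyu : y' ≤ u) : psiAux α β u y' ≤ psiAux α β u y := by
  refine le_csInf ((Set.nonempty_Icc.mpr (le_trans hyy hyu)).image _) ?_
  rintro x ⟨t, ht, rfl⟩
  dsimp
  rcases le_total y' t with h | h
  · have h1 := csInf_le (psiAux_bddBelow hα hβ (le_trans hy hyy)) (⟨t, ⟨h, ht.2⟩, rfl⟩ :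
      β t y' + α * (u - t) ∈ (fun t => β t y' + α * (u - t)) '' Set.Icc y' u)
    have h2 : β t y' ≤ β t y := hβ.2.2.2.2 t y' y hy hyy h
    unfold psiAux; linarith
  · have h1 : psiAux α β u y' ≤ α * (u - y') := psiAux_le_lin hα hβ (le_trans hy hyy) hyu
    have h2 : α * (u - y') ≤ α * (u - t) := mul_le_mul_of_nonneg_left (by linarith) hα
    have h3 : 0 ≤ β t y := hβ.2.1 t y hy ht.1
    linarith

lemma psiAux_subadd_key (hα : 0 ≤ α) (hβ : MemB β) {u t y : ℝ} (hy : 0 ≤ y) (hyt : y ≤ t)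
    (htu : t ≤ u) : psiAux α β u y ≤ psiAux α β u t + β t y := by
  have key : psiAux α β u y - β t y ≤ psiAux α β u t := by
    refine le_csInf ((Set.nonempty_Icc.mpr htu).image _) ?_
    rintro x ⟨s, hs, rfl⟩
    have h1 := csInf_le (psiAux_bddBelow hα hβ hy) (⟨s, ⟨le_trans hyt hs.1, hs.2⟩, rfl⟩ :
      β s y + α * (u - s) ∈ (fun t => β t y + α * (u - t)) '' Set.Icc y u)
    have h2 : β s y ≤ β s t + β t y := hβ.2.2.1 s t y hy hyt hs.1
    dsimp at h1 ⊢; unfold psiAux; linarith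
  linarith

lemma psiReg_bddAbove (hα : 0 ≤ α) (hβ : MemB β) {u v : ℝ} (hv : 0 ≤ v) (hvu : v ≤ u) :
    BddAbove ((fun y => psiAux α β u y - α * (v - y)) '' Set.Icc 0 v) := by
  refine ⟨β u 0, ?_⟩
  rintro x ⟨y, hy, rfl⟩
  have h1 : psiAux α β u y ≤ β u y := psiAux_le_beta hα hβ hy.1 (le_trans hy.2 hvu)
  have h2 : β u y ≤ β u 0 := hβ.2.2.2.2 u y 0 le_rfl hy.1 (le_trans hy.2 hvu)
  have h3 : 0 ≤ α * (v - y) := mul_nonneg hα (by linarith [hy.2])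
  dsimp; linarith

lemma psiAux_le_psiReg (hα : 0 ≤ α) (hβ : MemB β) {u v y : ℝ} (hy : 0 ≤ y) (hyv : y ≤ v)
    (hvu : v ≤ u) : psiAux α β u y - α * (v - y) ≤ psiReg α β u v :=
  le_csSup (psiReg_bddAbove hα hβ (le_trans hy hyv) hvu) ⟨y, ⟨hy, hyv⟩, rfl⟩

lemma psiReg_nonneg (hα : 0 ≤ α) (hβ : MemB β) {u v : ℝ} (hv : 0 ≤ v) (hvu : v ≤ u) :
    0 ≤ psiReg α β u v := by
  have h1 := psiAux_le_psiReg hα hβ hv le_rfl hvu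
  have h2 := psiAux_nonneg hα hβ hv hvu
  simp only [sub_self, mul_zero] at h1
  linarith

lemma psiReg_ge_beta (hα : 0 ≤ α) (hβ : MemB β)
    (hbd : ∀ u v, 0 ≤ v → v ≤ u → β u v ≤ α * (u - v) + η u)
    {u v : ℝ} (hv : 0 ≤ v) (hvu : v ≤ u) : β u v - η u ≤ psiReg α β u v := by
  have h1 := psiAux_le_psiReg hα hβ hv le_rfl hvu
  have h2 := psiAux_ge hα hβ hbd hv hvu
  simp only [sub_self, mul_zero] at h1
  linarith

lemma psiReg_le_beta (hα : 0 ≤ α) (hβ : MemB β)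
    (hbd : ∀ u v, 0 ≤ v → v ≤ u → β u v ≤ α * (u - v) + η u)
    (hηmono : ∀ a b, 0 ≤ a → a ≤ b → η a ≤ η b)
    {u v : ℝ} (hv : 0 ≤ v) (hvu : v ≤ u) : psiReg α β u v ≤ β u v + η u := by
  refine csSup_le ((Set.nonempty_Icc.mpr hv).image _) ?_
  rintro x ⟨y, hy, rfl⟩
  have h1 : psiAux α β u y ≤ β u y := psiAux_le_beta hα hβ hy.1 (le_trans hy.2 hvu)
  have h2 : β u y ≤ β u v + β v y := hβ.2.2.1 u v y hy.1 hy.2 hvu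
  have h3 : β v y ≤ α * (v - y) + η v := hbd v y hy.1 hy.2
  have h4 : η v ≤ η u := hηmono v u hv hvu
  dsimp; linarith

lemma psiReg_diag (hα : 0 ≤ α) (hβ : MemB β) {u : ℝ} (hu : 0 ≤ u) :
    psiReg α β u u = 0 := by
  refine le_antisymm ?_ (psiReg_nonneg hα hβ hu le_rfl)
  refine csSup_le ((Set.nonempty_Icc.mpr hu).image _) ?_
  rintro x ⟨y, hy, rfl⟩
  have h1 : psiAux α β u y ≤ α * (u - y) := psiAux_le_lin hα hβ hy.1 hy.2
  dsimp; linarith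

lemma psiReg_mono_u (hα : 0 ≤ α) (hβ : MemB β) {u u' v : ℝ} (hv : 0 ≤ v) (hvu : v ≤ u)
    (huu : u ≤ u') : psiReg α β u v ≤ psiReg α β u' v := by
  refine csSup_le ((Set.nonempty_Icc.mpr hv).image _) ?_
  rintro x ⟨y, hy, rfl⟩
  have h1 : psiAux α β u y ≤ psiAux α β u' y :=
    psiAux_mono_u hα hβ hy.1 (le_trans hy.2 hvu) huu
  have h2 := psiAux_le_psiReg hα hβ hy.1 hy.2 (le_trans hvu huu)
  dsimp; linarith

lemma psiReg_lip_u (hα : 0 ≤ α) (hβ : MemB β) {u u' v : ℝ} (hv : 0 ≤ v) (hvu : v ≤ u)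
    (huu : u ≤ u') : psiReg α β u' v ≤ psiReg α β u v + α * (u' - u) := by
  refine csSup_le ((Set.nonempty_Icc.mpr hv).image _) ?_
  rintro x ⟨y, hy, rfl⟩
  have h1 : psiAux α β u' y ≤ psiAux α β u y + α * (u' - u) :=
    psiAux_lip_u hα hβ hy.1 (le_trans hy.2 hvu) huu
  have h2 := psiAux_le_psiReg hα hβ hy.1 hy.2 hvu
  dsimp; linarith

lemma psiReg_anti_v (hα : 0 ≤ α) (hβ : MemB β) {u v v' : ℝ} (hv : 0 ≤ v) (hvv : v ≤ v')
    (hvu : v' ≤ u) : psiReg α β u v' ≤ psiReg α β u v := by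
  refine csSup_le ((Set.nonempty_Icc.mpr (le_trans hv hvv)).image _) ?_
  rintro x ⟨y, hy, rfl⟩
  dsimp
  rcases le_total y v with h | h
  · have h1 := psiAux_le_psiReg hα hβ hy.1 h (le_trans hvv hvu)
    have h2 : α * (v - y) ≤ α * (v' - y) := mul_le_mul_of_nonneg_left (by linarith) hα
    linarith
  · have h1 : psiAux α β u y ≤ psiAux α β u v :=
      psiAux_anti_y hα hβ hv h (le_trans hy.2 hvu)
    have h2 := psiAux_le_psiReg hα hβ hv le_rfl (le_trans hvv hvu)
    simp only [sub_self, mul_zero] at h2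
    have h3 : 0 ≤ α * (v' - y) := mul_nonneg hα (by linarith [hy.2])
    linarith

lemma psiReg_lip_v (hα : 0 ≤ α) (hβ : MemB β) {u v v' : ℝ} (hv : 0 ≤ v) (hvv : v ≤ v')
    (hvu : v' ≤ u) : psiReg α β u v ≤ psiReg α β u v' + α * (v' - v) := by
  refine csSup_le ((Set.nonempty_Icc.mpr hv).image _) ?_
  rintro x ⟨y, hy, rfl⟩
  have h1 := psiAux_le_psiReg hα hβ hy.1 (le_trans hy.2 hvv) hvu
  dsimp
  nlinarith [h1]

lemma psiReg_subadd (hα : 0 ≤ α) (hβ : MemB β) {u w v : ℝ} (hv : 0 ≤ v) (hvw : v ≤ w)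
    (hwu : w ≤ u) : psiReg α β u v ≤ psiReg α β u w + psiReg α β w v := by
  refine csSup_le ((Set.nonempty_Icc.mpr hv).image _) ?_
  rintro x ⟨y, hy, rfl⟩
  have hyw : y ≤ w := le_trans hy.2 hvw
  -- key: psiAux α β u y ≤ psiReg α β u w + psiAux α β w y
  have key : psiAux α β u y - psiReg α β u w ≤ psiAux α β w y := by
    refine le_csInf ((Set.nonempty_Icc.mpr hyw).image _) ?_
    rintro x ⟨t, ht, rfl⟩
    have h1 : psiAux α β u y ≤ psiAux α β u t + β t y :=
      psiAux_subadd_key hα hβ hy.1 ht.1 (le_trans ht.2 hwu)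
    have h2 : psiAux α β u t - α * (w - t) ≤ psiReg α β u w :=
      psiAux_le_psiReg hα hβ (le_trans hy.1 ht.1) ht.2 hwu
    dsimp; linarith
  have h3 : psiAux α β w y - α * (v - y) ≤ psiReg α β w v :=
    psiAux_le_psiReg hα hβ hy.1 hy.2 hvw
  dsimp; linarith


lemma psiReg_lip_v_abs (hα : 0 ≤ α) (hβ : MemB β) {U v v' : ℝ} (hv : 0 ≤ v) (hvU : v ≤ U)
    (hv' : 0 ≤ v') (hvU' : v' ≤ U) :
    |psiReg α β U v - psiReg α β U v'| ≤ α * |v - v'| := by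
  rcases le_total v v' with h | h
  · have c1 : psiReg α β U v' ≤ psiReg α β U v := psiReg_anti_v hα hβ hv h hvU'
    have c2 : psiReg α β U v ≤ psiReg α β U v' + α * (v' - v) := psiReg_lip_v hα hβ hv h hvU'
    have habs : |v - v'| = v' - v := by rw [abs_sub_comm]; exact abs_of_nonneg (by linarith)
    rw [habs]
    exact abs_le.mpr ⟨by nlinarith [mul_nonneg hα (sub_nonneg.mpr h)], by linarith⟩
  · have c1 : psiReg α β U v ≤ psiReg α β U v' := psiReg_anti_v hα hβ hv' h hvU
    have c2 : psiReg α β U v' ≤ psiReg α β U v + α * (v - v') := psiReg_lip_v hα hβ hv' h hvU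
    have habs : |v - v'| = v - v' := abs_of_nonneg (by linarith)
    rw [habs]
    exact abs_le.mpr ⟨by linarith, by nlinarith [mul_nonneg hα (sub_nonneg.mpr h)]⟩

lemma psiReg_lip_u_abs (hα : 0 ≤ α) (hβ : MemB β) {u u' v : ℝ} (hv : 0 ≤ v) (hvu : v ≤ u)
    (hvu' : v ≤ u') : |psiReg α β u v - psiReg α β u' v| ≤ α * |u - u'| := by
  rcases le_total u u' with h | h
  · have c1 : psiReg α β u v ≤ psiReg α β u' v := psiReg_mono_u hα hβ hv hvu h
    have c2 : psiReg α β u' v ≤ psiReg α β u v + α * (u' - u) := psiReg_lip_u hα hβ hv hvu h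
    have habs : |u - u'| = u' - u := by rw [abs_sub_comm]; exact abs_of_nonneg (by linarith)
    rw [habs]
    exact abs_le.mpr ⟨by linarith, by nlinarith [mul_nonneg hα (sub_nonneg.mpr h)]⟩
  · have c1 : psiReg α β u' v ≤ psiReg α β u v := psiReg_mono_u hα hβ hv hvu' h
    have c2 : psiReg α β u v ≤ psiReg α β u' v + α * (u - u') := psiReg_lip_u hα hβ hv hvu' h
    have habs : |u - u'| = u - u' := abs_of_nonneg (by linarith)
    rw [habs]
    exact abs_le.mpr ⟨by nlinarith [mul_nonneg hα (sub_nonneg.mpr h)], by linarith⟩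

end psiLemmas


/-- Lipschitz approximation: if `η` is increasing and `β ∈ 𝓑` satisfies
`β(u,v) ≤ α(u-v) + η(u)` on `Δ`, then there is `ψ ∈ 𝓑(α)` with
`β(u,v) - η(u) ≤ ψ(u,v) ≤ β(u,v) + η(u)` on `Δ`. -/
theorem approx_to_BLip (α : ℝ) (hα : 0 ≤ α) (η : ℝ → ℝ)
    (hη0 : ∀ u, 0 ≤ u → 0 ≤ η u) (hηmono : ∀ a b, 0 ≤ a → a ≤ b → η a ≤ η b)
    (β : ℝ → ℝ → ℝ) (hβ : MemB β)
    (hbd : ∀ u v, 0 ≤ v → v ≤ u → β u v ≤ α * (u - v) + η u) :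
    ∃ ψ : ℝ → ℝ → ℝ, MemBLip α ψ ∧
      ∀ u v, 0 ≤ v → v ≤ u → β u v - η u ≤ ψ u v ∧ ψ u v ≤ β u v + η u := by
  refine ⟨psiReg α β, ⟨⟨fun u hu => psiReg_diag hα hβ hu,
    fun u v hv hvu => psiReg_nonneg hα hβ hv hvu,
    fun u w v hv hvw hwu => psiReg_subadd hα hβ hv hvw hwu,
    fun u w v hv hvw hwu => psiReg_mono_u hα hβ hv hvw hwu,
    fun u w v hv hvw hwu => psiReg_anti_v hα hβ hv hvw hwu⟩, ?_⟩,
    fun u v hv hvu => ⟨psiReg_ge_beta hα hβ hbd hv hvu,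
      psiReg_le_beta hα hβ hbd hηmono hv hvu⟩⟩
  intro u v u' v' hv hvu hv' hvu'
  set U := max u u' with hU
  have huU : u ≤ U := le_max_left u u'
  have huU' : u' ≤ U := le_max_right u u'
  have t1 : |psiReg α β u v - psiReg α β U v| ≤ α * |u - U| :=
    psiReg_lip_u_abs hα hβ hv hvu (le_trans hvu huU)
  have t2 : |psiReg α β U v - psiReg α β U v'| ≤ α * |v - v'| :=
    psiReg_lip_v_abs hα hβ hv (le_trans hvu huU) hv' (le_trans hvu' huU')
  have t3 : |psiReg α β U v' - psiReg α β u' v'| ≤ α * |U - u'| := by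
    rw [abs_sub_comm]
    exact (abs_sub_comm U u') ▸ psiReg_lip_u_abs hα hβ hv' hvu' (le_trans hvu' huU')
  have tri : |psiReg α β u v - psiReg α β u' v'| ≤
      |psiReg α β u v - psiReg α β U v| + |psiReg α β U v - psiReg α β U v'| +
      |psiReg α β U v' - psiReg α β u' v'| := by
    calc |psiReg α β u v - psiReg α β u' v'| ≤
        |psiReg α β u v - psiReg α β U v| + |psiReg α β U v - psiReg α β u' v'| :=
          abs_sub_le _ _ _
      _ ≤ _ := by
          have := abs_sub_le (psiReg α β U v) (psiReg α β U v') (psiReg α β u' v')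
          linarith
  have hsum : |u - U| + |U - u'| = |u - u'| := by
    rcases le_total u u' with h | h
    · have hUe : U = u' := max_eq_right h
      rw [hUe, abs_sub_comm u u', sub_self, abs_zero]
      ring
    · have hUe : U = u := max_eq_left h
      rw [hUe, sub_self, abs_zero]
      ring
  have expand : α * (|u - u'| + |v - v'|) = α * |u - U| + α * |v - v'| + α * |U - u'| := by
    rw [← hsum]; ring
  linarith
end

section
/- Let γ : [0,1] → [0,∞) satisfy γ(1)=0, γ decreasing, and γ(λθ) ≤ γ(θ) + θγ(λ) for all λ,θ ∈ [0,1], and suppose γ is α-Lipschitz. Define ψ(u,v) = u·γ(v/u) for 0 < v ≤ u (and ψ(0,0)=0). Then ψ ∈ 𝓑(α): that is, ψ(u,u)=0, ψ is subadditive (ψ(u,v) ≤ ψ(u,w)+ψ(w,v) for v ≤ w ≤ u), increasing in u, decreasing in v, and α-Lipschitz. -/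
open Set Filter

/-!
For `ψ(u,v) = u γ(v/u)` and `0 < w ≤ u`, the substitution `λ = v/w`, `θ = w/u` turns
`γ(λθ) ≤ γ(θ) + θγ(λ)` into `ψ(u,v) ≤ ψ(u,w) + ψ(w,v)`, and `γ(1) = 0` with the Lipschitz bound
gives `ψ(u,w) ≤ α(u - w)`. Hence `0 ≤ ψ(u,v) - ψ(w,v) ≤ ψ(u,w) ≤ α(u - w)`, which is the
Lipschitz bound in the first variable; in the second, `ψ(u,·)` is `u` times `γ` rescaled by `1/u`.
-/

noncomputable def perspective (γ : ℝ → ℝ) (u v : ℝ) : ℝ := u * γ (v / u)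

namespace perspective

variable {γ : ℝ → ℝ} {α u v w : ℝ}

@[simp]
theorem zero_left (v : ℝ) : perspective γ 0 v = 0 := zero_mul _

theorem self (h1 : γ 1 = 0) (u : ℝ) : perspective γ u u = 0 := by
  rcases eq_or_ne u 0 with rfl | hu
  · exact zero_left 0
  · rw [perspective, div_self hu, h1, mul_zero]

theorem nonneg (hnonneg : ∀ θ, 0 ≤ θ → θ ≤ 1 → 0 ≤ γ θ) (hv : 0 ≤ v) (hvu : v ≤ u) :
    0 ≤ perspective γ u v := by
  rcases (hv.trans hvu).eq_or_lt with rfl | hu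
  · simp
  · exact mul_nonneg hu.le (hnonneg _ (div_nonneg hv hu.le) ((div_le_one hu).mpr hvu))

theorem le_add
    (hsub : ∀ l t, 0 ≤ l → l ≤ 1 → 0 ≤ t → t ≤ 1 → γ (l * t) ≤ γ t + t * γ l)
    (hv : 0 ≤ v) (hvw : v ≤ w) (hwu : w ≤ u) :
    perspective γ u v ≤ perspective γ u w + perspective γ w v := by
  rcases (hv.trans hvw).eq_or_lt with rfl | hw
  · obtain rfl : v = 0 := le_antisymm hvw hv
    simp
  have hu : 0 < u := hw.trans_le hwu
  have key := hsub (v / w) (w / u) (div_nonneg hv hw.le) ((div_le_one hw).mpr hvw)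
    (div_nonneg hw.le hu.le) ((div_le_one hu).mpr hwu)
  rw [div_mul_div_cancel₀ hw.ne'] at key
  calc perspective γ u v ≤ u * (γ (w / u) + w / u * γ (v / w)) :=
        mul_le_mul_of_nonneg_left key hu.le
    _ = perspective γ u w + perspective γ w v := by
        rw [perspective, perspective]; field_simp

theorem anti_right (hanti : ∀ a b, 0 ≤ a → a ≤ b → b ≤ 1 → γ b ≤ γ a)
    (hv : 0 ≤ v) (hvw : v ≤ w) (hwu : w ≤ u) :
    perspective γ u w ≤ perspective γ u v := by
  rcases (hv.trans (hvw.trans hwu)).eq_or_lt with rfl | hu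
  · simp
  · exact mul_le_mul_of_nonneg_left (hanti _ _ (div_nonneg hv hu.le)
      (div_le_div_of_nonneg_right hvw hu.le) ((div_le_one hu).mpr hwu)) hu.le

theorem mono_left (hnonneg : ∀ θ, 0 ≤ θ → θ ≤ 1 → 0 ≤ γ θ)
    (hanti : ∀ a b, 0 ≤ a → a ≤ b → b ≤ 1 → γ b ≤ γ a)
    (hv : 0 ≤ v) (hvw : v ≤ w) (hwu : w ≤ u) :
    perspective γ w v ≤ perspective γ u v := by
  rcases (hv.trans hvw).eq_or_lt with rfl | hw
  · simpa using nonneg hnonneg hv (hvw.trans hwu)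
  have hu : 0 < u := hw.trans_le hwu
  have hγ : γ (v / w) ≤ γ (v / u) :=
    hanti _ _ (div_nonneg hv hu.le) (div_le_div_of_nonneg_left hv hw hwu) ((div_le_one hw).mpr hvw)
  exact mul_le_mul hwu hγ (hnonneg _ (div_nonneg hv hw.le) ((div_le_one hw).mpr hvw)) hu.le

theorem le_mul_sub
    (hlip : ∀ a b, 0 ≤ a → a ≤ 1 → 0 ≤ b → b ≤ 1 → |γ a - γ b| ≤ α * |a - b|)
    (h1 : γ 1 = 0) (hw : 0 ≤ w) (hwu : w ≤ u) :
    perspective γ u w ≤ α * (u - w) := by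
  rcases (hw.trans hwu).eq_or_lt with rfl | hu
  · obtain rfl : w = 0 := le_antisymm hwu hw
    simp
  have hwu' : w / u ≤ 1 := (div_le_one hu).mpr hwu
  have hγ := hlip (w / u) 1 (div_nonneg hw hu.le) hwu' zero_le_one le_rfl
  rw [h1, sub_zero, abs_of_nonpos (sub_nonpos.mpr hwu')] at hγ
  calc perspective γ u w ≤ u * (α * -(w / u - 1)) :=
        mul_le_mul_of_nonneg_left ((le_abs_self _).trans hγ) hu.le
    _ = α * (u - w) := by field_simp; ring

theorem abs_sub_right_le
    (hlip : ∀ a b, 0 ≤ a → a ≤ 1 → 0 ≤ b → b ≤ 1 → |γ a - γ b| ≤ α * |a - b|)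
    (hv : 0 ≤ v) (hvu : v ≤ u) (hw : 0 ≤ w) (hwu : w ≤ u) :
    |perspective γ u v - perspective γ u w| ≤ α * |v - w| := by
  rcases (hv.trans hvu).eq_or_lt with rfl | hu
  · obtain ⟨rfl, rfl⟩ : v = 0 ∧ w = 0 := ⟨le_antisymm hvu hv, le_antisymm hwu hw⟩
    simp
  have hγ := hlip (v / u) (w / u) (div_nonneg hv hu.le) ((div_le_one hu).mpr hvu)
    (div_nonneg hw hu.le) ((div_le_one hu).mpr hwu)
  rw [div_sub_div_same, abs_div, abs_of_pos hu] at hγ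
  calc |perspective γ u v - perspective γ u w| = u * |γ (v / u) - γ (w / u)| := by
        rw [perspective, perspective, ← mul_sub, abs_mul, abs_of_pos hu]
    _ ≤ u * (α * (|v - w| / u)) := mul_le_mul_of_nonneg_left hγ hu.le
    _ = α * |v - w| := by field_simp

theorem abs_sub_le_of_le
    (hlip : ∀ a b, 0 ≤ a → a ≤ 1 → 0 ≤ b → b ≤ 1 → |γ a - γ b| ≤ α * |a - b|)
    (h1 : γ 1 = 0) (hnonneg : ∀ θ, 0 ≤ θ → θ ≤ 1 → 0 ≤ γ θ)
    (hanti : ∀ a b, 0 ≤ a → a ≤ b → b ≤ 1 → γ b ≤ γ a)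
    (hsub : ∀ l t, 0 ≤ l → l ≤ 1 → 0 ≤ t → t ≤ 1 → γ (l * t) ≤ γ t + t * γ l)
    {u' v' : ℝ} (hv : 0 ≤ v) (hvu : v ≤ u) (hv' : 0 ≤ v') (hvu' : v' ≤ u') (hu : u' ≤ u) :
    |perspective γ u v - perspective γ u' v'| ≤ α * (|u - u'| + |v - v'|) := by
  have hstep_u : |perspective γ u v' - perspective γ u' v'| ≤ α * |u - u'| := by
    rw [abs_of_nonneg (sub_nonneg.mpr hu), abs_of_nonneg (sub_nonneg.mpr
      (mono_left hnonneg hanti hv' hvu' hu))]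
    linarith [le_add hsub hv' hvu' hu, le_mul_sub hlip h1 (hv'.trans hvu') hu]
  have hstep_v := abs_sub_right_le hlip hv hvu hv' (hvu'.trans hu)
  calc |perspective γ u v - perspective γ u' v'|
      ≤ |perspective γ u v - perspective γ u v'| + |perspective γ u v' - perspective γ u' v'| :=
        abs_sub_le _ _ _
    _ ≤ α * (|u - u'| + |v - v'|) := by linarith

end perspective

theorem homogeneous_extension_general (α : ℝ) (γ : ℝ → ℝ) (hγ : MemGLip α γ) :
    MemBLip α (fun u v => u * γ (v / u)) := by
  obtain ⟨⟨h1, hnonneg, hanti, hsub⟩, hlip⟩ := hγ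
  refine ⟨⟨fun u _ => perspective.self h1 u, fun u v => perspective.nonneg hnonneg,
    fun u w v => perspective.le_add hsub, fun u w v => perspective.mono_left hnonneg hanti,
    fun u w v => perspective.anti_right hanti⟩, ?_⟩
  intro u v u' v' hv hvu hv' hvu'
  rcases le_total u' u with hu | hu
  · exact perspective.abs_sub_le_of_le hlip h1 hnonneg hanti hsub hv hvu hv' hvu' hu
  · rw [abs_sub_comm, abs_sub_comm u, abs_sub_comm v]
    exact perspective.abs_sub_le_of_le hlip h1 hnonneg hanti hsub hv' hvu' hv hvu hu

/-- If `γ ∈ 𝓖(α)`, then `ψ(u,v) = u·γ(v/u)` (with `ψ(0,0)=0`) belongs to `𝓑(α)`. -/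
theorem homogeneous_extension (α : ℝ) (hα : 0 ≤ α) (γ : ℝ → ℝ) (hγ : MemGLip α γ) :
    MemBLip α (fun u v => u * γ (v / u)) :=
  homogeneous_extension_general α γ hγ
end

section
/- Let ψ ∈ 𝓑(α) and define ψ_u(θ) = ψ(u,θu)/u for u > 0 and θ ∈ [0,1]. Then for every u > 0, ψ_u is a decreasing α-Lipschitz function from [0,1] into [0,α] with ψ_u(1) = 0, and the limsup function Γ(ψ)(θ) = limsup_{u→∞} ψ_u(θ) satisfies Γ(ψ) ∈ 𝓖(α): it is decreasing, α-Lipschitz, vanishes at 1, and satisfies Γ(ψ)(λθ) ≤ Γ(ψ)(θ) + θ·Γ(ψ)(λ) for all λ,θ ∈ [0,1]. -/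
open Set Filter

/-- For `ψ ∈ 𝓑(α)` and `u > 0`, the function `ψ_u(θ) = ψ(u,θu)/u` is a decreasing
`α`-Lipschitz function from `[0,1]` into `[0,α]` vanishing at `1`, and
`Γ(ψ)(θ) = limsup_{u→∞} ψ_u(θ)` belongs to `𝓖(α)`. -/
theorem Gam_mem_GLip (α : ℝ) (hα : 0 ≤ α) (ψ : ℝ → ℝ → ℝ) (hψ : MemBLip α ψ) :
    (∀ u : ℝ, 0 < u →
      (∀ a b, 0 ≤ a → a ≤ b → b ≤ 1 → ψ u (b * u) / u ≤ ψ u (a * u) / u) ∧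
      (∀ a b, 0 ≤ a → a ≤ 1 → 0 ≤ b → b ≤ 1 →
        |ψ u (a * u) / u - ψ u (b * u) / u| ≤ α * |a - b|) ∧
      (∀ θ, 0 ≤ θ → θ ≤ 1 → 0 ≤ ψ u (θ * u) / u ∧ ψ u (θ * u) / u ≤ α) ∧
      ψ u (1 * u) / u = 0) ∧
    MemGLip α (Gam ψ) := by
  obtain ⟨⟨h1, h2, h3, h4, h5⟩, hLip⟩ := hψ
  set F : ℝ → ℝ → ℝ := fun θ u => ψ u (θ * u) / u with hF
  have key : ∀ u : ℝ, 0 < u → ∀ θ : ℝ, 0 ≤ θ → θ ≤ 1 →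
      0 ≤ F θ u ∧ F θ u ≤ α * (1 - θ) := by
    intro u hu θ hθ0 hθ1
    have hθu0 : 0 ≤ θ * u := mul_nonneg hθ0 hu.le
    have hθuu : θ * u ≤ u := by nlinarith
    refine ⟨div_nonneg (h2 u (θ * u) hθu0 hθuu) hu.le, ?_⟩
    have hl := le_of_abs_le (hLip u (θ * u) u u hθu0 hθuu hu.le le_rfl)
    rw [h1 u hu.le, sub_zero, sub_self, abs_zero, zero_add,
      abs_of_nonpos (by nlinarith : θ * u - u ≤ 0)] at hl
    show ψ u (θ * u) / u ≤ _
    rw [div_le_iff₀ hu]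
    nlinarith
  have keyLip : ∀ u : ℝ, 0 < u → ∀ a b : ℝ, 0 ≤ a → a ≤ 1 → 0 ≤ b → b ≤ 1 →
      |F a u - F b u| ≤ α * |a - b| := by
    intro u hu a b ha0 ha1 hb0 hb1
    have hl := hLip u (a * u) u (b * u) (mul_nonneg ha0 hu.le) (by nlinarith)
      (mul_nonneg hb0 hu.le) (by nlinarith)
    show |ψ u (a * u) / u - ψ u (b * u) / u| ≤ _
    rw [div_sub_div_same, abs_div, abs_of_pos hu, div_le_iff₀ hu]
    calc |ψ u (a * u) - ψ u (b * u)| ≤ α * (|u - u| + |a * u - b * u|) := hl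
      _ = α * |a - b| * u := by
          rw [sub_self, abs_zero, zero_add, ← sub_mul, abs_mul, abs_of_pos hu]; ring
  have keyMono : ∀ u : ℝ, 0 < u → ∀ a b : ℝ, 0 ≤ a → a ≤ b → b ≤ 1 →
      F b u ≤ F a u := by
    intro u hu a b ha0 hab hb1
    have h' := h5 u (b * u) (a * u) (mul_nonneg ha0 hu.le) (by nlinarith) (by nlinarith)
    show ψ u (b * u) / u ≤ ψ u (a * u) / u
    gcongr
  -- eventual bounds
  have hev : ∀ θ : ℝ, 0 ≤ θ → θ ≤ 1 → ∀ᶠ u in atTop, 0 ≤ F θ u ∧ F θ u ≤ α * (1 - θ) := by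
    intro θ h0 h1'
    filter_upwards [eventually_gt_atTop 0] with u hu
    exact key u hu θ h0 h1'
  have bdd : ∀ θ : ℝ, 0 ≤ θ → θ ≤ 1 → IsBoundedUnder (· ≤ ·) atTop (F θ) := fun θ h0 h1' =>
    isBoundedUnder_of_eventually_le ((hev θ h0 h1').mono fun u h => h.2)
  have bddge : ∀ θ : ℝ, 0 ≤ θ → θ ≤ 1 → IsBoundedUnder (· ≥ ·) atTop (F θ) := fun θ h0 h1' =>
    isBoundedUnder_of_eventually_ge ((hev θ h0 h1').mono fun u h => h.1)
  have cobdd : ∀ θ : ℝ, 0 ≤ θ → θ ≤ 1 → IsCoboundedUnder (· ≤ ·) atTop (F θ) := fun θ h0 h1' =>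
    (bddge θ h0 h1').isCoboundedUnder_le
  have hGamEq : ∀ θ : ℝ, Gam ψ θ = limsup (F θ) atTop := fun θ => rfl
  -- monotonicity of Gam
  have Gmono : ∀ a b : ℝ, 0 ≤ a → a ≤ b → b ≤ 1 → Gam ψ b ≤ Gam ψ a := by
    intro a b ha0 hab hb1
    rw [hGamEq, hGamEq]
    refine limsup_le_limsup ?_ (cobdd b (ha0.trans hab) hb1) (bdd a ha0 (hab.trans hb1))
    filter_upwards [eventually_gt_atTop 0] with u hu
    exact keyMono u hu a b ha0 hab hb1
  -- Gam 1 = 0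
  have Gone : Gam ψ 1 = 0 := by
    rw [hGamEq]
    have : ∀ᶠ u in atTop, F 1 u = (0 : ℝ) := by
      filter_upwards [eventually_ge_atTop 0] with u hu
      show ψ u (1 * u) / u = 0
      rw [one_mul, h1 u hu, zero_div]
    rw [limsup_congr this, limsup_const]
  -- Gam nonneg
  have Gnonneg : ∀ θ : ℝ, 0 ≤ θ → θ ≤ 1 → 0 ≤ Gam ψ θ := by
    intro θ h0 h1'
    rw [hGamEq]
    exact le_limsup_of_frequently_le (((hev θ h0 h1').mono fun u h => h.1).frequently)
      (bdd θ h0 h1')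
  -- one-sided Lipschitz
  have Glip1 : ∀ a b : ℝ, 0 ≤ a → a ≤ b → b ≤ 1 → Gam ψ a ≤ Gam ψ b + α * (b - a) := by
    intro a b ha0 hab hb1
    have ha1 : a ≤ 1 := hab.trans hb1
    have hb0 : 0 ≤ b := ha0.trans hab
    rw [hGamEq, hGamEq]
    have step1 : limsup (F a) atTop ≤ limsup (F b + fun _ => α * (b - a)) atTop := by
      refine limsup_le_limsup ?_ (cobdd a ha0 ha1) ?_
      · filter_upwards [eventually_gt_atTop 0] with u hu
        have := keyLip u hu a b ha0 ha1 hb0 hb1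
        have habs : |a - b| = b - a := by
          rw [abs_sub_comm, abs_of_nonneg (sub_nonneg.2 hab)]
        simp only [Pi.add_apply]
        have h2' := le_of_abs_le this
        rw [habs] at h2'
        linarith
      · refine isBoundedUnder_of_eventually_le (a := α * (1 - b) + α * (b - a)) ?_
        filter_upwards [hev b hb0 hb1] with u hu
        simp only [Pi.add_apply]
        linarith [hu.2]
    have step2 : limsup (F b + fun _ => α * (b - a)) atTop ≤
        limsup (F b) atTop + limsup (fun _ : ℝ => α * (b - a)) atTop := by
      exact limsup_add_le (bddge b hb0 hb1) (bdd b hb0 hb1)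
        (isBoundedUnder_const (a := α * (b - a))).isCoboundedUnder_le isBoundedUnder_const
    rw [limsup_const] at step2
    linarith [step1, step2]
  -- subadditivity
  have Gsub : ∀ l t : ℝ, 0 ≤ l → l ≤ 1 → 0 ≤ t → t ≤ 1 →
      Gam ψ (l * t) ≤ Gam ψ t + t * Gam ψ l := by
    intro l t hl0 hl1 ht0 ht1
    rcases eq_or_lt_of_le ht0 with rfl | htpos
    · simp
    have hlt0 : 0 ≤ l * t := mul_nonneg hl0 ht0
    have hlt1 : l * t ≤ 1 := by nlinarith
    have htend : Tendsto (fun u : ℝ => t * u) atTop atTop :=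
      Tendsto.const_mul_atTop htpos tendsto_id
    rw [hGamEq, hGamEq, hGamEq]
    -- composed function bounds
    have hevc : ∀ᶠ u in atTop, 0 ≤ F l (t * u) ∧ F l (t * u) ≤ α * (1 - l) := by
      filter_upwards [htend.eventually (eventually_gt_atTop 0)] with u hu
      exact key (t * u) hu l hl0 hl1
    have step1 : limsup (F (l * t)) atTop ≤
        limsup (F t + fun u => t * F l (t * u)) atTop := by
      refine limsup_le_limsup ?_ (cobdd (l * t) hlt0 hlt1) ?_
      · filter_upwards [eventually_gt_atTop 0] with u hu
        have htu0 : 0 < t * u := mul_pos htpos hu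
        have hsub := h3 u (t * u) (l * (t * u)) (by positivity)
          (by nlinarith) (by nlinarith)
        simp only [Pi.add_apply]
        show ψ u (l * t * u) / u ≤ ψ u (t * u) / u + t * (ψ (t * u) (l * (t * u)) / (t * u))
        have he : t * (ψ (t * u) (l * (t * u)) / (t * u)) = ψ (t * u) (l * (t * u)) / u := by
          field_simp
        rw [he, mul_assoc, ← add_div]
        gcongr
      · refine isBoundedUnder_of_eventually_le (a := α * (1 - t) + t * (α * (1 - l))) ?_
        filter_upwards [hev t ht0 ht1, hevc] with u hu huc
        simp only [Pi.add_apply]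
        have := mul_le_mul_of_nonneg_left huc.2 ht0
        linarith [hu.2]
    have hbddc : IsBoundedUnder (· ≤ ·) atTop fun u => t * F l (t * u) :=
      isBoundedUnder_of_eventually_le (a := t * (α * (1 - l)))
        (hevc.mono fun u hu => mul_le_mul_of_nonneg_left hu.2 ht0)
    have hcobddc : IsCoboundedUnder (· ≤ ·) atTop (fun u => t * F l (t * u)) :=
      (isBoundedUnder_of_eventually_ge
        (hevc.mono fun u hu => mul_nonneg ht0 hu.1)).isCoboundedUnder_le
    have step2 : limsup (F t + fun u => t * F l (t * u)) atTop ≤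
        limsup (F t) atTop + limsup (fun u => t * F l (t * u)) atTop :=
      limsup_add_le (bddge t ht0 ht1) (bdd t ht0 ht1) hcobddc hbddc
    have step3 : limsup (fun u => t * F l (t * u)) atTop ≤
        t * limsup (fun u => F l (t * u)) atTop := by
      have := limsup_mul_le (f := atTop) (u := fun _ : ℝ => t) (v := fun u => F l (t * u))
        (Eventually.of_forall fun _ => ht0).frequently isBoundedUnder_const
        (hevc.mono fun u hu => hu.1)
        (isBoundedUnder_of_eventually_le (hevc.mono fun u hu => hu.2))
      rw [limsup_const] at this
      exact this
    have step4 : limsup (fun u => F l (t * u)) atTop ≤ limsup (F l) atTop := by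
      have hcomp : limsup (fun u => F l (t * u)) atTop =
          limsup (F l) (map (fun u : ℝ => t * u) atTop) :=
        limsup_comp (F l) (fun u : ℝ => t * u) atTop
      rw [hcomp]
      refine limsup_le_limsup_of_le htend ?_ (bdd l hl0 hl1)
      refine IsBoundedUnder.isCoboundedUnder_le ?_
      refine isBoundedUnder_of_eventually_ge (a := 0) ?_
      rw [eventually_map]
      exact hevc.mono fun u hu => hu.1
    have : limsup (fun u => F l (t * u)) atTop ≤ limsup (F l) atTop := step4
    nlinarith [step1, step2, step3, step4, mul_le_mul_of_nonneg_left step4 ht0]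
  refine ⟨fun u hu => ⟨keyMono u hu, keyLip u hu, fun θ h0 h1' =>
      ⟨(key u hu θ h0 h1').1, (key u hu θ h0 h1').2.trans (by nlinarith)⟩,
      by rw [one_mul, h1 u hu.le, zero_div]⟩,
    ⟨⟨Gone, Gnonneg, Gmono, Gsub⟩, ?_⟩⟩
  intro a b ha0 ha1 hb0 hb1
  rcases le_total a b with hab | hab
  · have habs : |a - b| = b - a := by rw [abs_sub_comm, abs_of_nonneg (sub_nonneg.2 hab)]
    rw [habs, abs_le]
    constructor
    · linarith [Glip1 a b ha0 hab hb1, Gmono a b ha0 hab hb1]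
    · linarith [Glip1 a b ha0 hab hb1, Gmono a b ha0 hab hb1]
  · have habs : |a - b| = a - b := abs_of_nonneg (sub_nonneg.2 hab)
    rw [habs, abs_le]
    constructor
    · linarith [Glip1 b a hb0 hab ha1, Gmono b a hb0 hab ha1]
    · linarith [Glip1 b a hb0 hab ha1, Gmono b a hb0 hab ha1]
end

section
/- The map Γ : 𝓑(α) → 𝓖(α) defined by Γ(ψ)(θ) = limsup_{u→∞} ψ(u,θu)/u is surjective. More precisely, for every γ ∈ 𝓖(α), the function ψ(u,v) = u·γ(v/u) belongs to 𝓑(α) and satisfies Γ(ψ) = γ; moreover, any β ∈ 𝓑(α) with Γ(β) ≤ γ pointwise satisfies β(u,θu)/u ≤ γ(θ) + o(1) uniformly, i.e. β(u,v) ≤ ψ(u,v) + o(u). -/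
open Set Filter

section helpers
variable {α : ℝ} {γ : ℝ → ℝ} (hγ : MemGLip α γ)
include hγ

lemma gam_le (t : ℝ) (h0 : 0 ≤ t) (h1 : t ≤ 1) : γ t ≤ α * (1 - t) := by
  have := hγ.2 t 1 h0 h1 zero_le_one le_rfl
  rw [hγ.1.1] at this
  have h2 : |t - 1| = 1 - t := by rw [abs_sub_comm]; exact abs_of_nonneg (by linarith)
  rw [sub_zero, h2] at this
  calc γ t ≤ |γ t| := le_abs_self _
  _ ≤ α * (1 - t) := this

omit hγ in
lemma divIcc (v u : ℝ) (h0 : 0 ≤ v) (h1 : v ≤ u) : 0 ≤ v / u ∧ v / u ≤ 1 := by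
  rcases eq_or_lt_of_le (h0.trans h1) with h | h
  · simp [← h]
  · exact ⟨div_nonneg h0 h.le, (div_le_one h).mpr h1⟩

lemma psi_mono1 (v w u : ℝ) (h0 : 0 ≤ v) (h1 : v ≤ w) (h2 : w ≤ u) :
    w * γ (v / w) ≤ u * γ (v / u) := by
  rcases eq_or_lt_of_le (h0.trans h1) with h | hw
  · have hv : v = 0 := le_antisymm (h1.trans h.symm.le) h0
    have hg := hγ.1.2.1 0 le_rfl zero_le_one
    rw [← h, hv]
    simp only [zero_div, zero_mul, div_zero]
    have hu : 0 ≤ u := h ▸ h2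
    positivity
  · obtain ⟨d0, d1⟩ := divIcc v u h0 (h1.trans h2)
    obtain ⟨e0, e1⟩ := divIcc v w h0 h1
    have hdiv : v / u ≤ v / w := by gcongr
    have hmono : γ (v / w) ≤ γ (v / u) := hγ.1.2.2.1 (v/u) (v/w) d0 hdiv e1
    have hg := hγ.1.2.1 (v/u) d0 d1
    nlinarith

lemma psi_lipH (hα : 0 ≤ α) (v u' u : ℝ) (h0 : 0 ≤ v) (h1 : v ≤ u') (h2 : u' ≤ u) :
    u * γ (v / u) - u' * γ (v / u') ≤ α * (u - u') := by
  rcases eq_or_lt_of_le (h0.trans h1) with h | hw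
  · have hv : v = 0 := le_antisymm (h1.trans h.symm.le) h0
    rw [← h, hv]
    simp only [zero_div, zero_mul, div_zero, mul_zero, sub_zero]
    rcases eq_or_lt_of_le (h ▸ h2 : (0:ℝ) ≤ u) with h' | h'
    · simp [← h']
    · have := gam_le hγ 0 le_rfl zero_le_one
      nlinarith
  · have hu : 0 < u := hw.trans_le h2
    obtain ⟨d0, d1⟩ := divIcc v u h0 (h1.trans h2)
    obtain ⟨e0, e1⟩ := divIcc v u' h0 h1
    have hdiv : v / u ≤ v / u' := by gcongr
    have hlip : γ (v/u) - γ (v/u') ≤ α * (v/u' - v/u) := by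
      have h := hγ.2 (v/u) (v/u') d0 d1 e0 e1
      have habs : |v/u - v/u'| = v/u' - v/u := by
        rw [abs_sub_comm]; exact abs_of_nonneg (by linarith)
      rw [habs] at h
      have := le_abs_self (γ (v/u) - γ (v/u'))
      linarith
    have hge := gam_le hγ (v/u') e0 e1
    have key : u * (v/u' - v/u) = (u - u') * (v / u') := by
      field_simp
    nlinarith [mul_le_mul_of_nonneg_left hlip hu.le]

lemma psi_lipV (v v' u : ℝ) (h0 : 0 ≤ v) (h1 : v ≤ u) (h0' : 0 ≤ v') (h1' : v' ≤ u) :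
    |u * γ (v / u) - u * γ (v' / u)| ≤ α * |v - v'| := by
  rcases eq_or_lt_of_le (h0.trans h1) with h | hu
  · have hv : v = 0 := le_antisymm (h1.trans h.symm.le) h0
    have hv' : v' = 0 := le_antisymm (h1'.trans h.symm.le) h0'
    simp [← h, hv, hv']
  · obtain ⟨d0, d1⟩ := divIcc v u h0 h1
    obtain ⟨e0, e1⟩ := divIcc v' u h0' h1'
    have := hγ.2 (v/u) (v'/u) d0 d1 e0 e1
    rw [← mul_sub, abs_mul, abs_of_pos hu]
    have hd : |v/u - v'/u| = |v - v'| / u := by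
      rw [div_sub_div_same, abs_div, abs_of_pos hu]
    rw [hd] at this
    calc u * |γ (v/u) - γ (v'/u)| ≤ u * (α * (|v - v'| / u)) :=
          mul_le_mul_of_nonneg_left this hu.le
    _ = α * |v - v'| := by field_simp

-- full Lipschitz, assuming u' ≤ u
lemma psi_lip_aux (hα : 0 ≤ α) (u v u' v' : ℝ) (h0 : 0 ≤ v) (h1 : v ≤ u)
    (h0' : 0 ≤ v') (h1' : v' ≤ u') (hle : u' ≤ u) :
    |u * γ (v / u) - u' * γ (v' / u')| ≤ α * (|u - u'| + |v - v'|) := by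
  have huu : |u - u'| = u - u' := abs_of_nonneg (by linarith)
  rcases le_or_gt v u' with hv | hv
  · have T1 : |u * γ (v/u) - u' * γ (v/u')| ≤ α * (u - u') := by
      have m := psi_mono1 hγ v u' u h0 hv hle
      have l := psi_lipH hγ hα v u' u h0 hv hle
      rw [abs_of_nonneg (by linarith)]; exact l
    have T2 : |u' * γ (v/u') - u' * γ (v'/u')| ≤ α * |v - v'| :=
      psi_lipV hγ v v' u' h0 hv h0' h1'
    calc |u * γ (v/u) - u' * γ (v'/u')|
        ≤ |u * γ (v/u) - u' * γ (v/u')| + |u' * γ (v/u') - u' * γ (v'/u')| :=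
          abs_sub_le _ _ _
    _ ≤ α * (u - u') + α * |v - v'| := add_le_add T1 T2
    _ = α * (|u - u'| + |v - v'|) := by rw [huu]; ring
  · -- v' ≤ u' < v ≤ u
    have hvv : |v - v'| = v - v' := abs_of_nonneg (by linarith)
    have T1 : |u * γ (v/u) - u * γ (u'/u)| ≤ α * (v - u') :=
      (abs_of_nonneg (by linarith : (0:ℝ) ≤ v - u')) ▸
        psi_lipV hγ v u' u h0 h1 (h0'.trans h1') (hle)
    have T2 : |u * γ (u'/u) - u' * γ (u'/u')| ≤ α * (u - u') := by
      have m := psi_mono1 hγ u' u' u (h0'.trans h1') le_rfl hle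
      have l := psi_lipH hγ hα u' u' u (h0'.trans h1') le_rfl hle
      rw [abs_of_nonneg (by linarith)]; exact l
    have T3 : |u' * γ (u'/u') - u' * γ (v'/u')| ≤ α * (u' - v') :=
      (abs_of_nonneg (by linarith : (0:ℝ) ≤ u' - v')) ▸
        psi_lipV hγ u' v' u' (h0'.trans h1') le_rfl h0' h1'
    have tri : |u * γ (v/u) - u' * γ (v'/u')| ≤
        |u * γ (v/u) - u * γ (u'/u)| + |u * γ (u'/u) - u' * γ (u'/u')| +
        |u' * γ (u'/u') - u' * γ (v'/u')| := by
      have := abs_sub_le (u * γ (v/u)) (u * γ (u'/u)) (u' * γ (v'/u'))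
      have := abs_sub_le (u * γ (u'/u)) (u' * γ (u'/u')) (u' * γ (v'/u'))
      linarith
    rw [huu, hvv]
    linarith

lemma psi_memBLip (hα : 0 ≤ α) : MemBLip α (fun u v => u * γ (v / u)) := by
  refine ⟨⟨?_, ?_, ?_, ?_, ?_⟩, ?_⟩
  · intro u hu
    rcases eq_or_lt_of_le hu with h | h
    · simp [← h]
    · simp [div_self h.ne', hγ.1.1]
  · intro u v h0 h1
    obtain ⟨d0, d1⟩ := divIcc v u h0 h1
    have := hγ.1.2.1 (v/u) d0 d1
    have hu : 0 ≤ u := h0.trans h1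
    positivity
  · -- subadditivity
    intro u w v h0 h1 h2
    rcases eq_or_lt_of_le (h0.trans h1) with h | hw
    · have hv : v = 0 := le_antisymm (h1.trans h.symm.le) h0
      rw [← h, hv]
      simp
    · have hu : 0 < u := hw.trans_le h2
      have hsub := hγ.1.2.2.2 (v/w) (w/u) (divIcc v w h0 h1).1 (divIcc v w h0 h1).2
        (divIcc w u hw.le h2).1 (divIcc w u hw.le h2).2
      have hprod : (v/w) * (w/u) = v/u := by field_simp
      rw [hprod] at hsub
      have := mul_le_mul_of_nonneg_left hsub hu.le
      have hwu : u * (w/u * γ (v/w)) = w * γ (v/w) := by field_simp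
      nlinarith
  · intro u w v h0 h1 h2
    exact psi_mono1 hγ v w u h0 h1 h2
  · intro u w v h0 h1 h2
    rcases eq_or_lt_of_le ((h0.trans h1).trans h2) with h | hu
    · simp [← h]
    · have hdiv : v/u ≤ w/u := by gcongr
      exact mul_le_mul_of_nonneg_left
        (hγ.1.2.2.1 (v/u) (w/u) (divIcc v u h0 (h1.trans h2)).1 hdiv
          (divIcc w u (h0.trans h1) h2).2) hu.le
  · intro u v u' v' h0 h1 h0' h1'
    rcases le_total u' u with hle | hle
    · exact psi_lip_aux hγ hα u v u' v' h0 h1 h0' h1' hle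
    · rw [abs_sub_comm, abs_sub_comm u, abs_sub_comm v]
      exact psi_lip_aux hγ hα u' v' u v h0' h1' h0 h1 hle

end helpers

lemma part3 {α : ℝ} {γ : ℝ → ℝ} (hα : 0 ≤ α) (hγ : MemGLip α γ)
    (β : ℝ → ℝ → ℝ) (hβ : MemBLip α β)
    (hle : ∀ θ, 0 ≤ θ → θ ≤ 1 → Gam β θ ≤ γ θ) :
    ∃ η : ℝ → ℝ, (∀ u, 0 ≤ η u) ∧
      Filter.Tendsto (fun u => η u / u) Filter.atTop (nhds 0) ∧
      ∀ u v, 0 ≤ v → v ≤ u → β u v ≤ u * γ (v / u) + η u := by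
  obtain ⟨⟨hdg, hnn, hsubb, hm1, hm2⟩, hlip⟩ := hβ
  have hβ00 : β 0 0 = 0 := hdg 0 le_rfl
  have hb0 : ∀ u, 0 ≤ u → β u 0 ≤ α * u := by
    intro u hu
    have h := hlip u 0 0 0 le_rfl hu le_rfl le_rfl
    rw [hβ00] at h
    simp only [sub_zero, sub_self, abs_zero, add_zero] at h
    have := le_abs_self (β u 0)
    rw [abs_of_nonneg hu] at h
    linarith
  have hbb : ∀ u v, 0 ≤ v → v ≤ u → β u v ≤ α * u := fun u v h0 h1 =>
    (hm2 u v 0 le_rfl h0 h1).trans (hb0 u (h0.trans h1))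
  have hpsinn : ∀ u v, 0 ≤ v → v ≤ u → 0 ≤ u * γ (v/u) := by
    intro u v h0 h1
    obtain ⟨d0, d1⟩ := divIcc v u h0 h1
    have := hγ.1.2.1 (v/u) d0 d1
    have hu : 0 ≤ u := h0.trans h1
    positivity
  set η : ℝ → ℝ :=
    fun u => max 0 (sSup ((fun v => β u v - u * γ (v/u)) '' Icc 0 u)) with hηdef
  have hηnn : ∀ u, 0 ≤ η u := fun u => le_max_left _ _
  have hbound : ∀ u v, 0 ≤ v → v ≤ u → β u v ≤ u * γ (v/u) + η u := by
    intro u v h0 h1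
    have hB : BddAbove ((fun v => β u v - u * γ (v/u)) '' Icc 0 u) := by
      refine ⟨α * u, ?_⟩
      rintro x ⟨w, ⟨hw0, hw1⟩, rfl⟩
      have h2 := hbb u w hw0 hw1
      have h3 := hpsinn u w hw0 hw1
      simp only []
      linarith
    have h4 := le_csSup hB ⟨v, ⟨h0, h1⟩, rfl⟩
    have h5 : sSup ((fun v => β u v - u * γ (v/u)) '' Icc 0 u) ≤ η u := le_max_right _ _
    simp only [] at h4
    linarith
  have key : ∀ ε : ℝ, 0 < ε → ∀ᶠ u in (atTop : Filter ℝ),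
      ∀ v, 0 ≤ v → v ≤ u → β u v - u * γ (v/u) ≤ ε * u := by
    intro ε hε
    set n : ℕ := ⌈3*α/ε⌉₊ + 1 with hn
    have hn0 : (0:ℝ) < n := by
      rw [hn]; push_cast; positivity
    have h3α : 3*α ≤ ε * n := by
      have hc : 3*α/ε ≤ ((⌈3*α/ε⌉₊ : ℕ) : ℝ) := Nat.le_ceil _
      have hcn : ((⌈3*α/ε⌉₊ : ℕ) : ℝ) ≤ (n : ℝ) := by rw [hn]; push_cast; linarith
      have := (div_le_iff₀ hε).mp (hc.trans hcn)
      linarith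
    have grid : ∀ j ∈ Finset.range (n+1), ∀ᶠ u in (atTop : Filter ℝ),
        β u (((j:ℝ)/(n:ℝ)) * u) / u < γ ((j:ℝ)/(n:ℝ)) + ε/3 := by
      intro j hj
      have hjn : (j:ℝ) ≤ (n:ℝ) := by
        exact_mod_cast Nat.lt_succ_iff.mp (Finset.mem_range.mp hj)
      have ht0 : 0 ≤ (j:ℝ)/(n:ℝ) := by positivity
      have ht1 : (j:ℝ)/(n:ℝ) ≤ 1 := (div_le_one hn0).mpr hjn
      have hbnd : IsBoundedUnder (· ≤ ·) (atTop : Filter ℝ)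
          (fun u => β u (((j:ℝ)/(n:ℝ)) * u) / u) := by
        refine ⟨α, ?_⟩
        rw [eventually_map]
        filter_upwards [eventually_gt_atTop 0] with u hu
        have h1 : 0 ≤ ((j:ℝ)/(n:ℝ)) * u := mul_nonneg ht0 hu.le
        have h2 : ((j:ℝ)/(n:ℝ)) * u ≤ u := by nlinarith
        exact (div_le_iff₀ hu).mpr (by nlinarith [hbb u _ h1 h2, hu.le])
      have hγj := hle ((j:ℝ)/(n:ℝ)) ht0 ht1
      exact Filter.eventually_lt_of_limsup_lt (lt_of_le_of_lt hγj (by linarith)) hbnd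
    filter_upwards [eventually_ge_atTop 1, (Filter.eventually_all_finset _).mpr grid]
      with u hu1 hgrid
    intro v h0 h1
    have hu : (0:ℝ) < u := lt_of_lt_of_le one_pos hu1
    obtain ⟨t0, t1⟩ := divIcc v u h0 h1
    set θ : ℝ := v/u with hθdef
    set j : ℕ := ⌊θ * n⌋₊ with hjdef
    have hθn : θ * n ≤ (n:ℝ) := by nlinarith
    have hjn : j ≤ n := by
      calc j ≤ ⌊(n:ℝ)⌋₊ := Nat.floor_le_floor hθn
      _ = n := Nat.floor_natCast n
    have hjm : j ∈ Finset.range (n+1) := Finset.mem_range.mpr (Nat.lt_succ_of_le hjn)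
    have hfl1 : (j:ℝ) ≤ θ * n := Nat.floor_le (by positivity)
    have hfl2 : θ * n < (j:ℝ) + 1 := Nat.lt_floor_add_one _
    set θj : ℝ := (j:ℝ)/(n:ℝ) with hθjdef
    have hθj0 : 0 ≤ θj := by positivity
    have hθj1 : θj ≤ 1 := by
      rw [hθjdef, div_le_one hn0]; exact_mod_cast hjn
    have hd1 : θj ≤ θ := by rw [hθjdef, div_le_iff₀ hn0]; exact hfl1
    have hd2 : θ - θj ≤ 1/(n:ℝ) := by
      have hup : θ ≤ ((j:ℝ)+1)/(n:ℝ) := (le_div_iff₀ hn0).mpr hfl2.le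
      have hsplit : ((j:ℝ)+1)/(n:ℝ) = (j:ℝ)/(n:ℝ) + 1/(n:ℝ) := add_div _ _ _
      rw [hθjdef]
      linarith
    have hw0 : 0 ≤ θj * u := mul_nonneg hθj0 hu.le
    have hw1 : θj * u ≤ u := by nlinarith
    have hvw : |v - θj * u| ≤ u / (n:ℝ) := by
      have hv : v = θ * u := by rw [hθdef]; field_simp
      have heq : θ * u - θj * u = (θ - θj) * u := by ring
      rw [hv, heq, abs_of_nonneg (mul_nonneg (by linarith) hu.le)]
      calc (θ - θj) * u ≤ (1/(n:ℝ)) * u := by nlinarith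
      _ = u / n := by ring
    have hβl : |β u v - β u (θj * u)| ≤ α * (u/(n:ℝ)) := by
      have h := hlip u v u (θj * u) h0 h1 hw0 hw1
      simp only [sub_self, abs_zero, zero_add] at h
      calc |β u v - β u (θj * u)| ≤ α * |v - θj * u| := h
      _ ≤ α * (u/(n:ℝ)) := mul_le_mul_of_nonneg_left hvw hα
    have hγl : γ θj - γ θ ≤ α * (1/(n:ℝ)) := by
      have h := hγ.2 θj θ hθj0 hθj1 t0 t1
      have habs : |θj - θ| = θ - θj := by rw [abs_sub_comm]; exact abs_of_nonneg (by linarith)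
      rw [habs] at h
      have := le_abs_self (γ θj - γ θ)
      have := mul_le_mul_of_nonneg_left hd2 hα
      linarith
    have hg := hgrid j hjm
    have hgu : β u (θj * u) ≤ (γ θj + ε/3) * u := ((div_lt_iff₀ hu).mp hg).le
    have e1 : β u v ≤ β u (θj * u) + α * (u/(n:ℝ)) := by
      have := le_abs_self (β u v - β u (θj * u))
      linarith
    have e2' : γ θj ≤ γ θ + α * (1/(n:ℝ)) := by linarith
    have e2 : u * γ θj ≤ u * (γ θ + α * (1/(n:ℝ))) :=
      mul_le_mul_of_nonneg_left e2' hu.le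
    have hfin : 2 * (α * (u/(n:ℝ))) ≤ (2*ε/3) * u := by
      have han : α / (n:ℝ) ≤ ε/3 := by
        rw [div_le_iff₀ hn0]
        linarith
      calc 2 * (α * (u/(n:ℝ))) = (α/(n:ℝ)) * (2*u) := by ring
      _ ≤ (ε/3) * (2*u) := mul_le_mul_of_nonneg_right han (by linarith)
      _ = (2*ε/3) * u := by ring
    have e2x : u * γ θj ≤ u * γ θ + α * (u/(n:ℝ)) := by
      calc u * γ θj ≤ u * (γ θ + α * (1/(n:ℝ))) := e2
      _ = u * γ θ + α * (u/(n:ℝ)) := by ring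
    have hgu2 : β u (θj * u) ≤ u * γ θj + ε/3 * u := by
      calc β u (θj * u) ≤ (γ θj + ε/3) * u := hgu
      _ = u * γ θj + ε/3 * u := by ring
    have hgoal : β u v - u * γ θ ≤ ε * u := by linarith
    exact hgoal
  refine ⟨η, hηnn, ?_, hbound⟩
  rw [NormedAddCommGroup.tendsto_nhds_zero]
  intro ε hε
  filter_upwards [key (ε/2) (half_pos hε), eventually_ge_atTop 1] with u hk hu1
  have hu : (0:ℝ) < u := lt_of_lt_of_le one_pos hu1
  have hsup : sSup ((fun v => β u v - u * γ (v/u)) '' Icc 0 u) ≤ ε/2 * u := by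
    apply Real.sSup_le
    · rintro x ⟨w, ⟨hw0, hw1⟩, rfl⟩
      exact hk w hw0 hw1
    · positivity
  have hηu : η u ≤ ε/2 * u := by
    rw [hηdef]
    exact max_le (by positivity) hsup
  rw [Real.norm_eq_abs, abs_of_nonneg (div_nonneg (hηnn u) hu.le)]
  rw [div_lt_iff₀ hu]
  nlinarith [hηnn u]


/-- `Γ : 𝓑(α) → 𝓖(α)` is surjective, with maximal right-inverse `ψ(u,v) = u·γ(v/u)`:
`ψ ∈ 𝓑(α)`, `Γ(ψ) = γ` on `[0,1]`, and any `β ∈ 𝓑(α)` with `Γ(β) ≤ γ` pointwise satisfies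
`β(u,v) ≤ ψ(u,v) + o(u)`. -/
theorem Gam_surjective (α : ℝ) (hα : 0 ≤ α) (γ : ℝ → ℝ) (hγ : MemGLip α γ) :
    MemBLip α (fun u v => u * γ (v / u)) ∧
    (∀ θ, 0 ≤ θ → θ ≤ 1 → Gam (fun u v => u * γ (v / u)) θ = γ θ) ∧
    (∀ β : ℝ → ℝ → ℝ, MemBLip α β → (∀ θ, 0 ≤ θ → θ ≤ 1 → Gam β θ ≤ γ θ) →
      ∃ η : ℝ → ℝ, (∀ u, 0 ≤ η u) ∧
        Filter.Tendsto (fun u => η u / u) Filter.atTop (nhds 0) ∧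
        ∀ u v, 0 ≤ v → v ≤ u → β u v ≤ u * γ (v / u) + η u) := by
  refine ⟨psi_memBLip hγ hα, ?_, fun β hβ hle => part3 hα hγ β hβ hle⟩
  intro θ _ _
  unfold Gam
  have h : ∀ᶠ u in (atTop : Filter ℝ),
      (fun u v => u * γ (v / u)) u (θ * u) / u = γ θ := by
    filter_upwards [eventually_gt_atTop 0] with u hu
    show u * γ (θ * u / u) / u = γ θ
    rw [mul_div_cancel_right₀ θ hu.ne', mul_div_cancel_left₀ _ hu.ne']
  rw [Filter.limsup_congr h, Filter.limsup_const]
end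

section
/- Let 0 ≤ h ≤ α and β ∈ 𝓑(α). Define Φ_h(β)(u,v) = max over 0 ≤ z ≤ u of: β(u−z, v−z) if 0 ≤ z ≤ v, and h(z−v) + β(u−z, 0) if v ≤ z ≤ u. Then Φ_h(β) ∈ 𝓑̄_h(α): it belongs to 𝓑(α), satisfies Φ_h(β)(u+z, v+z) ≥ Φ_h(β)(u,v) for all (u,v) ∈ Δ and z ≥ 0, and satisfies Φ_h(β)(u,0) − Φ_h(β)(v,0) ≥ h(u−v) for all 0 ≤ v ≤ u. -/
open Set Filter

/-! Writing the integrand of `Φ_h(β)` as `h (z - v)⁺ + β(u - z, (v - z)⁺)`, most defining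
properties of `𝓑` pass from `β` to `Φ_h(β)` pointwise in `z`; for subadditivity with `z > w`
the excess `h (z - v)` splits at `w`, and `Φ_h(β)(w, v) ≥ h (w - v)`. Diagonal monotonicity and
growth `h` along the bottom edge come from translating `z`. For the Lipschitz bound, lowering
`v` moves mass from the second argument of `β` (worth `α` per unit) to the excess over the bottom
edge (worth `h ≤ α`), and lowering `u` below `z` is paid for by `β(a, b) ≤ α (a - b)`, the same
bound that makes the supremum finite. -/

section

variable {h α : ℝ} {β : ℝ → ℝ → ℝ}

theorem MemBLip.apply_le_apply_add (hβ : MemBLip α β) {a b a' b' : ℝ} (hb : 0 ≤ b)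
    (hba : b ≤ a) (hb' : 0 ≤ b') (hba' : b' ≤ a') :
    β a b ≤ β a' b' + α * (|a - a'| + |b - b'|) := by
  linarith [(abs_le.1 (hβ.2 a b a' b' hb hba hb' hba')).2]

theorem MemBLip.apply_le_mul_sub (hβ : MemBLip α β) {a b : ℝ} (hb : 0 ≤ b) (hba : b ≤ a) :
    β a b ≤ α * (a - b) := by
  have := hβ.apply_le_apply_add hb hba hb le_rfl
  rwa [hβ.1.1 b hb, sub_self, abs_zero, add_zero, abs_of_nonneg (sub_nonneg.2 hba),
    zero_add] at this

theorem max_sub_zero_sub_max_sub_zero (a b : ℝ) : max (a - b) 0 - max (b - a) 0 = a - b := by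
  simpa using max_zero_sub_max_neg_zero_eq_self (a - b)

noncomputable def phiIntegrand (h : ℝ) (β : ℝ → ℝ → ℝ) (u v z : ℝ) : ℝ :=
  h * max (z - v) 0 + β (u - z) (max (v - z) 0)

theorem phiIntegrand_of_le {u v z : ℝ} (hzv : z ≤ v) :
    phiIntegrand h β u v z = β (u - z) (v - z) := by
  simp [phiIntegrand, hzv]

theorem phiIntegrand_of_ge {u v z : ℝ} (hvz : v ≤ z) :
    phiIntegrand h β u v z = h * (z - v) + β (u - z) 0 := by
  simp [phiIntegrand, hvz]

theorem Phi_eq_sSup_phiIntegrand (h : ℝ) (β : ℝ → ℝ → ℝ) (u v : ℝ) :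
    Phi h β u v = sSup (phiIntegrand h β u v '' Icc 0 u) := by
  unfold Phi
  congr 2
  funext z
  rcases le_total z v with hzv | hvz
  · rw [if_pos hzv, phiIntegrand_of_le hzv]
  · rcases hvz.eq_or_lt with rfl | hvz
    · rw [if_pos le_rfl, phiIntegrand_of_le le_rfl]
    · rw [if_neg hvz.not_ge, phiIntegrand_of_ge hvz.le]

theorem phiIntegrand_le_mul_sub (hhα : h ≤ α) (hβ : MemBLip α β) {u v z : ℝ} (hvu : v ≤ u)
    (hzu : z ≤ u) : phiIntegrand h β u v z ≤ α * (u - v) := by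
  have hβz := hβ.apply_le_mul_sub (a := u - z) (le_max_right (v - z) 0)
    (max_le (by linarith) (by linarith))
  have hh := mul_le_mul_of_nonneg_right hhα (le_max_right (z - v) 0)
  unfold phiIntegrand
  linear_combination hh + hβz + α * max_sub_zero_sub_max_sub_zero z v

theorem phiIntegrand_le_Phi (hhα : h ≤ α) (hβ : MemBLip α β) {u v z : ℝ} (hvu : v ≤ u)
    (hz : z ∈ Icc 0 u) : phiIntegrand h β u v z ≤ Phi h β u v := by
  rw [Phi_eq_sSup_phiIntegrand]
  refine le_csSup ⟨α * (u - v), forall_mem_image.2 fun z hz => ?_⟩ (mem_image_of_mem _ hz)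
  exact phiIntegrand_le_mul_sub hhα hβ hvu hz.2

theorem Phi_le_of_forall_phiIntegrand_le {u v M : ℝ} (hu : 0 ≤ u)
    (hM : ∀ z ∈ Icc 0 u, phiIntegrand h β u v z ≤ M) : Phi h β u v ≤ M := by
  rw [Phi_eq_sSup_phiIntegrand]
  exact csSup_le ((nonempty_Icc.2 hu).image _) (forall_mem_image.2 hM)

theorem Phi_self (hhα : h ≤ α) (hβ : MemBLip α β) {u : ℝ} (hu : 0 ≤ u) : Phi h β u u = 0 := by
  refine le_antisymm (Phi_le_of_forall_phiIntegrand_le hu fun z hz => ?_) ?_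
  · rw [phiIntegrand_of_le hz.2, hβ.1.1 _ (sub_nonneg.2 hz.2)]
  · simpa [phiIntegrand_of_le hu, hβ.1.1 u hu] using
      phiIntegrand_le_Phi (h := h) hhα hβ le_rfl ⟨le_rfl, hu⟩

theorem apply_le_Phi (hhα : h ≤ α) (hβ : MemBLip α β) {u v : ℝ} (hv : 0 ≤ v) (hvu : v ≤ u) :
    β u v ≤ Phi h β u v := by
  simpa [phiIntegrand_of_le hv] using phiIntegrand_le_Phi hhα hβ hvu ⟨le_rfl, hv.trans hvu⟩

theorem Phi_le_Phi_add_Phi (hhα : h ≤ α) (hβ : MemBLip α β) {u w v : ℝ} (hv : 0 ≤ v)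
    (hvw : v ≤ w) (hwu : w ≤ u) : Phi h β u v ≤ Phi h β u w + Phi h β w v := by
  refine Phi_le_of_forall_phiIntegrand_le (hv.trans (hvw.trans hwu)) fun z hz => ?_
  rcases le_total z w with hzw | hwz
  · have hsub := hβ.1.2.2.1 (u - z) (w - z) (max (v - z) 0) (le_max_right _ _)
      (max_le (by linarith) (by linarith)) (by linarith)
    have hw := phiIntegrand_le_Phi hhα hβ hwu hz
    have hwv := phiIntegrand_le_Phi hhα hβ hvw ⟨hz.1, hzw⟩
    rw [phiIntegrand_of_le hzw] at hw
    unfold phiIntegrand at hwv ⊢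
    linarith
  · have hw := phiIntegrand_le_Phi hhα hβ hwu hz
    have hwv := phiIntegrand_le_Phi hhα hβ hvw ⟨hv.trans hvw, le_rfl⟩
    rw [phiIntegrand_of_ge hwz] at hw
    rw [phiIntegrand_of_ge hvw, sub_self, hβ.1.1 0 le_rfl] at hwv
    rw [phiIntegrand_of_ge (hvw.trans hwz)]
    linarith

theorem Phi_le_Phi_of_le_fst (hhα : h ≤ α) (hβ : MemBLip α β) {u w v : ℝ} (hv : 0 ≤ v)
    (hvw : v ≤ w) (hwu : w ≤ u) : Phi h β w v ≤ Phi h β u v := by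
  refine Phi_le_of_forall_phiIntegrand_le (hv.trans hvw) fun z hz => ?_
  refine le_trans ?_ (phiIntegrand_le_Phi hhα hβ (hvw.trans hwu) ⟨hz.1, hz.2.trans hwu⟩)
  have := hβ.1.2.2.2.1 (u - z) (w - z) (max (v - z) 0) (le_max_right _ _)
    (max_le (by linarith) (by linarith [hz.2])) (by linarith)
  unfold phiIntegrand
  linarith

theorem Phi_le_Phi_of_le_snd (hh : 0 ≤ h) (hhα : h ≤ α) (hβ : MemBLip α β) {u w v : ℝ}
    (hv : 0 ≤ v) (hvw : v ≤ w) (hwu : w ≤ u) : Phi h β u w ≤ Phi h β u v := by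
  refine Phi_le_of_forall_phiIntegrand_le (hv.trans (hvw.trans hwu)) fun z hz => ?_
  refine le_trans ?_ (phiIntegrand_le_Phi hhα hβ (hvw.trans hwu) hz)
  have := hβ.1.2.2.2.2 (u - z) (max (w - z) 0) (max (v - z) 0) (le_max_right _ _)
    (by gcongr) (max_le (by linarith [hz.2]) (by linarith [hz.2]))
  unfold phiIntegrand
  gcongr

theorem Phi_le_Phi_add_mul_sub_fst (hhα : h ≤ α) (hβ : MemBLip α β) {u u' v : ℝ} (hv : 0 ≤ v)
    (hvu' : v ≤ u') (hu'u : u' ≤ u) : Phi h β u v ≤ Phi h β u' v + α * (u - u') := by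
  refine Phi_le_of_forall_phiIntegrand_le (hv.trans (hvu'.trans hu'u)) fun z hz => ?_
  rcases le_total z u' with hzu' | hu'z
  · have hβz := hβ.apply_le_apply_add (a := u - z) (a' := u' - z) (le_max_right (v - z) 0)
      (max_le (by linarith) (by linarith)) (le_max_right (v - z) 0)
      (max_le (by linarith) (by linarith))
    rw [sub_sub_sub_cancel_right, abs_of_nonneg (sub_nonneg.2 hu'u), sub_self, abs_zero,
      add_zero] at hβz
    have := phiIntegrand_le_Phi hhα hβ hvu' ⟨hz.1, hzu'⟩
    unfold phiIntegrand at this ⊢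
    linarith
  · -- compare with the endpoint `z = u'`, where the integrand is `h * (u' - v)`
    have hβz := hβ.apply_le_mul_sub (le_refl 0) (sub_nonneg.2 hz.2)
    have hh := mul_le_mul_of_nonneg_right hhα (sub_nonneg.2 hu'z)
    have := phiIntegrand_le_Phi hhα hβ hvu' ⟨hv.trans hvu', le_rfl⟩
    rw [phiIntegrand_of_ge hvu', sub_self, hβ.1.1 0 le_rfl] at this
    rw [phiIntegrand_of_ge (hvu'.trans hu'z)]
    linarith

theorem Phi_le_Phi_add_mul_sub_snd (hhα : h ≤ α) (hβ : MemBLip α β) {u v v' : ℝ} (hv' : 0 ≤ v')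
    (hv'v : v' ≤ v) (hvu : v ≤ u) : Phi h β u v' ≤ Phi h β u v + α * (v - v') := by
  refine Phi_le_of_forall_phiIntegrand_le (hv'.trans (hv'v.trans hvu)) fun z hz => ?_
  have hβz := hβ.apply_le_apply_add (a := u - z) (a' := u - z) (le_max_right (v' - z) 0)
    (max_le (by linarith [hz.2]) (by linarith [hz.2])) (le_max_right (v - z) 0)
    (max_le (by linarith [hz.2]) (by linarith [hz.2]))
  have hmax : max (v' - z) 0 ≤ max (v - z) 0 := by gcongr
  have hmax' : max (z - v) 0 ≤ max (z - v') 0 := by gcongr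
  rw [sub_self, abs_zero, zero_add, abs_of_nonpos (sub_nonpos.2 hmax)] at hβz
  have hh := mul_le_mul_of_nonneg_right hhα (sub_nonneg.2 hmax')
  have := phiIntegrand_le_Phi hhα hβ hvu hz
  unfold phiIntegrand at this ⊢
  linear_combination this + hβz + hh + α * (max_sub_zero_sub_max_sub_zero z v' -
    max_sub_zero_sub_max_sub_zero z v)

theorem Phi_sub_Phi_le (hh : 0 ≤ h) (hhα : h ≤ α) (hβ : MemBLip α β) {u v u' v' : ℝ}
    (hv : 0 ≤ v) (hvu : v ≤ u) (hv' : 0 ≤ v') (hv'u' : v' ≤ u') :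
    Phi h β u v - Phi h β u' v' ≤ α * (|u - u'| + |v - v'|) := by
  have hα : 0 ≤ α := hh.trans hhα
  set m := min v v'
  have hm : 0 ≤ m := le_min hv hv'
  have hfst : Phi h β u m ≤ Phi h β u' m + α * |u - u'| := by
    rcases le_total u u' with hle | hle
    · have := Phi_le_Phi_of_le_fst hhα hβ hm ((min_le_left _ _).trans hvu) hle
      linarith [mul_nonneg hα (abs_nonneg (u - u'))]
    · rw [abs_of_nonneg (sub_nonneg.2 hle)]
      exact Phi_le_Phi_add_mul_sub_fst hhα hβ hm ((min_le_right _ _).trans hv'u') hle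
  have hsnd := Phi_le_Phi_add_mul_sub_snd hhα hβ hm (min_le_right v v') hv'u'
  have hm' : v' - m ≤ |v - v'| := by
    rw [← max_sub_min_eq_abs']
    exact sub_le_sub_right (le_max_right v v') m
  rw [sub_le_iff_le_add']
  calc Phi h β u v ≤ Phi h β u m := Phi_le_Phi_of_le_snd hh hhα hβ hm (min_le_left v v') hvu
    _ ≤ Phi h β u' v' + α * (v' - m) + α * |u - u'| := by linarith
    _ ≤ Phi h β u' v' + α * |v - v'| + α * |u - u'| := by gcongr
    _ = Phi h β u' v' + α * (|u - u'| + |v - v'|) := by ring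

theorem abs_Phi_sub_Phi_le (hh : 0 ≤ h) (hhα : h ≤ α) (hβ : MemBLip α β) {u v u' v' : ℝ}
    (hv : 0 ≤ v) (hvu : v ≤ u) (hv' : 0 ≤ v') (hv'u' : v' ≤ u') :
    |Phi h β u v - Phi h β u' v'| ≤ α * (|u - u'| + |v - v'|) := by
  refine abs_sub_le_iff.2 ⟨Phi_sub_Phi_le hh hhα hβ hv hvu hv' hv'u', ?_⟩
  rw [abs_sub_comm u, abs_sub_comm v]
  exact Phi_sub_Phi_le hh hhα hβ hv' hv'u' hv hvu

theorem Phi_le_Phi_add_add (hhα : h ≤ α) (hβ : MemBLip α β) {u v w : ℝ} (hv : 0 ≤ v)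
    (hvu : v ≤ u) (hw : 0 ≤ w) : Phi h β u v ≤ Phi h β (u + w) (v + w) := by
  refine Phi_le_of_forall_phiIntegrand_le (hv.trans hvu) fun z hz => ?_
  have := phiIntegrand_le_Phi hhα hβ (by linarith : v + w ≤ u + w) (z := z + w)
    ⟨by linarith [hz.1], by linarith [hz.2]⟩
  simpa only [phiIntegrand, add_sub_add_right_eq_sub] using this

theorem Phi_zero_add_mul_sub_le (hhα : h ≤ α) (hβ : MemBLip α β) {u v : ℝ} (hv : 0 ≤ v)
    (hvu : v ≤ u) : Phi h β v 0 + h * (u - v) ≤ Phi h β u 0 := by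
  rw [← le_sub_iff_add_le]
  refine Phi_le_of_forall_phiIntegrand_le hv fun z hz => ?_
  have := phiIntegrand_le_Phi hhα hβ (hv.trans hvu) (z := z + (u - v))
    ⟨by linarith [hz.1], by linarith [hz.2]⟩
  rw [phiIntegrand_of_ge (by linarith [hz.1]), show u - (z + (u - v)) = v - z by ring] at this
  rw [phiIntegrand_of_ge hz.1]
  linarith

end

/-- For `0 ≤ h ≤ α` and `β ∈ 𝓑(α)`, the projection `Φ_h(β)` belongs to `𝓑̄_h(α)`. -/
theorem Phi_mem_Bbar (h α : ℝ) (hh : 0 ≤ h) (hhα : h ≤ α)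
    (β : ℝ → ℝ → ℝ) (hβ : MemBLip α β) :
    MemBbar h α (Phi h β) :=
  ⟨⟨⟨fun _ hu => Phi_self hhα hβ hu,
      fun _ _ hv hvu => (hβ.1.2.1 _ _ hv hvu).trans (apply_le_Phi hhα hβ hv hvu),
      fun _ _ _ hv hvw hwu => Phi_le_Phi_add_Phi hhα hβ hv hvw hwu,
      fun _ _ _ hv hvw hwu => Phi_le_Phi_of_le_fst hhα hβ hv hvw hwu,
      fun _ _ _ hv hvw hwu => Phi_le_Phi_of_le_snd hh hhα hβ hv hvw hwu⟩,
    fun _ _ _ _ hv hvu hv' hv'u' => abs_Phi_sub_Phi_le hh hhα hβ hv hvu hv' hv'u'⟩,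
    fun _ _ _ hv hvu hw => Phi_le_Phi_add_add hhα hβ hv hvu hw,
    fun _ _ hv hvu => le_sub_iff_add_le'.2 (Phi_zero_add_mul_sub_le hhα hβ hv hvu)⟩
end

section
/- Let 0 ≤ h ≤ α and β ∈ 𝓑(α). Then Φ_h(β) = inf{ξ ∈ 𝓑̄_h(α) : ξ ≥ β}; that is, Φ_h(β) is the least element of 𝓑̄_h(α) dominating β pointwise. Consequently, Φ_h : 𝓑(α) → 𝓑̄_h(α) is surjective, idempotent, and the identity on 𝓑̄_h(α). -/
open Set Filter

/-!
Continue `β` below the edge `v = 0` with slope `h`, setting `β̃(a, b) = β(a, b⁺) + h b⁻`. Then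
`Φ_h(β)(u, v)` is the supremum of `β̃` along the diagonal segment `(u - z, v - z)`, `0 ≤ z ≤ u`,
so `Φ_h(β)` is monotone along diagonals and grows at rate `h` along the edge by construction,
while the defining properties of `𝓑(α)` pass from `β̃` to the supremum. Conversely a member `ξ`
of `𝓑̄_h(α)` dominates its own extension along these segments, so `Φ_h(ξ) ≤ ξ`; as `Φ_h` is
monotone, `β ≤ ξ` gives `Φ_h(β) ≤ Φ_h(ξ) ≤ ξ`.
-/

theorem abs_posPart_sub_add_abs_negPart_sub {G : Type*} [AddCommGroup G] [LinearOrder G]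
    [IsOrderedAddMonoid G] (a b : G) : |a⁺ - b⁺| + |a⁻ - b⁻| = |a - b| := by
  rcases le_total 0 a with ha | ha <;> rcases le_total 0 b with hb | hb <;>
    simp only [posPart_of_nonneg, posPart_of_nonpos, negPart_of_nonneg, negPart_of_nonpos,
      ha, hb, sub_zero, zero_sub, sub_self, abs_zero, add_zero, zero_add, abs_neg, neg_sub_neg]
  · rw [abs_of_nonneg ha, abs_of_nonpos hb, abs_of_nonneg (sub_nonneg.2 (hb.trans ha)),
      sub_eq_add_neg]
  · rw [abs_of_nonpos ha, abs_of_nonneg hb, abs_of_nonpos (sub_nonpos.2 (ha.trans hb)), neg_sub,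
      sub_eq_add_neg, add_comm]
  · rw [abs_sub_comm]

section Projection

variable {h α : ℝ} {β ξ : ℝ → ℝ → ℝ} {a a' b b' c t u u' v v' w z : ℝ}

def extendBelow (h : ℝ) (β : ℝ → ℝ → ℝ) (a b : ℝ) : ℝ := β a b⁺ + h * b⁻

theorem extendBelow_of_nonneg (hb : 0 ≤ b) : extendBelow h β a b = β a b := by
  simp [extendBelow, posPart_of_nonneg hb, negPart_of_nonneg hb]

theorem extendBelow_of_nonpos (hb : b ≤ 0) : extendBelow h β a b = β a 0 - h * b := by
  simp [extendBelow, posPart_of_nonpos hb, negPart_of_nonpos hb, sub_eq_add_neg]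

theorem extendBelow_sub_of_nonpos (hb : b ≤ 0) (ht : 0 ≤ t) :
    extendBelow h β a (b - t) = extendBelow h β a b + h * t := by
  rw [extendBelow_of_nonpos hb, extendBelow_of_nonpos (by linarith)]
  ring

theorem extendBelow_mono_left (hβ : MemB β) (hba' : b ≤ a') (ha' : 0 ≤ a') (ha'a : a' ≤ a) :
    extendBelow h β a' b ≤ extendBelow h β a b :=
  add_le_add_left (hβ.2.2.2.1 a a' b⁺ (posPart_nonneg b) (sup_le hba' ha') ha'a) _

theorem extendBelow_anti_right (hh : 0 ≤ h) (hβ : MemB β) (ha : 0 ≤ a) (hba : b ≤ a)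
    (hb'b : b' ≤ b) : extendBelow h β a b ≤ extendBelow h β a b' :=
  add_le_add (hβ.2.2.2.2 a b⁺ b'⁺ (posPart_nonneg b') (posPart_mono hb'b) (sup_le hba ha))
    (mul_le_mul_of_nonneg_left (negPart_anti hb'b) hh)

theorem extendBelow_le_add (hβ : MemB β) (hcb : c ≤ b) (hb : 0 ≤ b) (hba : b ≤ a) :
    extendBelow h β a c ≤ extendBelow h β a b + extendBelow h β b c := by
  rw [extendBelow_of_nonneg hb]
  have := hβ.2.2.1 a b c⁺ (posPart_nonneg c) (sup_le hcb hb) hba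
  unfold extendBelow
  linarith

theorem abs_extendBelow_sub_le (hh : 0 ≤ h) (hhα : h ≤ α) (hβ : MemBLip α β)
    (ha : 0 ≤ a) (hba : b ≤ a) (ha' : 0 ≤ a') (hba' : b' ≤ a') :
    |extendBelow h β a b - extendBelow h β a' b'| ≤ α * (|a - a'| + |b - b'|) := by
  have hpos := hβ.2 a b⁺ a' b'⁺ (posPart_nonneg b) (sup_le hba ha) (posPart_nonneg b')
    (sup_le hba' ha')
  have hneg : |h * b⁻ - h * b'⁻| ≤ α * |b⁻ - b'⁻| := by
    rw [← mul_sub, abs_mul, abs_of_nonneg hh]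
    exact mul_le_mul_of_nonneg_right hhα (abs_nonneg _)
  have hparts : α * (|b⁺ - b'⁺| + |b⁻ - b'⁻|) = α * |b - b'| := by
    rw [abs_posPart_sub_add_abs_negPart_sub]
  calc |extendBelow h β a b - extendBelow h β a' b'|
      = |(β a b⁺ - β a' b'⁺) + (h * b⁻ - h * b'⁻)| := by unfold extendBelow; ring_nf
    _ ≤ |β a b⁺ - β a' b'⁺| + |h * b⁻ - h * b'⁻| := abs_add_le _ _
    _ ≤ α * (|a - a'| + |b - b'|) := by linarith

theorem extendBelow_mono (hle : ∀ u v, 0 ≤ v → v ≤ u → β u v ≤ ξ u v) (ha : 0 ≤ a)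
    (hba : b ≤ a) : extendBelow h β a b ≤ extendBelow h ξ a b :=
  add_le_add_left (hle a b⁺ (posPart_nonneg b) (sup_le hba ha)) _

theorem extendBelow_le_of_memBbar (hξ : MemBbar h α ξ) (hv : 0 ≤ v) (hvu : v ≤ u)
    (hz : z ∈ Icc 0 u) : extendBelow h ξ (u - z) (v - z) ≤ ξ u v := by
  rcases le_total z v with hzv | hvz
  · rw [extendBelow_of_nonneg (sub_nonneg.2 hzv)]
    simpa using hξ.2.1 (u - z) (v - z) z (by linarith) (by linarith) hz.1
  · rw [extendBelow_of_nonpos (by linarith)]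
    have hgrowth := hξ.2.2 (u - v) (u - z) (by linarith [hz.2]) (by linarith)
    have hdiag := hξ.2.1 (u - v) 0 v le_rfl (by linarith) hv
    rw [sub_add_cancel, zero_add] at hdiag
    linarith

theorem phi_eq_sSup_extendBelow (h : ℝ) (β : ℝ → ℝ → ℝ) (u v : ℝ) :
    Phi h β u v = sSup ((fun z => extendBelow h β (u - z) (v - z)) '' Icc 0 u) := by
  unfold Phi
  congr with z
  split_ifs with hzv
  · rw [extendBelow_of_nonneg (sub_nonneg.2 hzv)]
  · rw [extendBelow_of_nonpos (by linarith)]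
    ring

theorem extendBelow_le_phi (hh : 0 ≤ h) (hβ : MemB β) (hvu : v ≤ u) (hz : z ∈ Icc 0 u) :
    extendBelow h β (u - z) (v - z) ≤ Phi h β u v := by
  rw [phi_eq_sSup_extendBelow]
  refine le_csSup ⟨extendBelow h β u (v - u), ?_⟩ (mem_image_of_mem _ hz)
  rintro _ ⟨y, ⟨hy0, hyu⟩, rfl⟩
  calc extendBelow h β (u - y) (v - y)
      ≤ extendBelow h β u (v - y) :=
        extendBelow_mono_left hβ (by linarith) (by linarith) (by linarith)
    _ ≤ extendBelow h β u (v - u) :=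
        extendBelow_anti_right hh hβ (by linarith) (by linarith) (by linarith)

theorem phi_le_of_forall {c : ℝ} (hu : 0 ≤ u)
    (H : ∀ z ∈ Icc 0 u, extendBelow h β (u - z) (v - z) ≤ c) : Phi h β u v ≤ c := by
  rw [phi_eq_sSup_extendBelow]
  exact csSup_le ((nonempty_Icc.2 hu).image _) (forall_mem_image.2 H)

theorem le_phi (hh : 0 ≤ h) (hβ : MemB β) (hv : 0 ≤ v) (hvu : v ≤ u) : β u v ≤ Phi h β u v := by
  have := extendBelow_le_phi hh hβ hvu ⟨le_rfl, hv.trans hvu⟩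
  rwa [sub_zero, sub_zero, extendBelow_of_nonneg hv] at this

theorem mul_sub_le_phi (hh : 0 ≤ h) (hβ : MemB β) (hv : 0 ≤ v) (hvu : v ≤ u) :
    h * (u - v) ≤ Phi h β u v := by
  have := extendBelow_le_phi hh hβ hvu ⟨hv.trans hvu, le_rfl⟩
  rwa [sub_self, extendBelow_of_nonpos (by linarith), hβ.1 0 le_rfl, zero_sub, ← mul_neg,
    neg_sub] at this

theorem phi_self (hh : 0 ≤ h) (hβ : MemB β) (hu : 0 ≤ u) : Phi h β u u = 0 := by
  refine le_antisymm (phi_le_of_forall hu fun z hz => ?_) (hβ.1 u hu ▸ le_phi hh hβ hu le_rfl)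
  rw [extendBelow_of_nonneg (by linarith [hz.2]), hβ.1 _ (by linarith [hz.2])]

theorem phi_nonneg (hh : 0 ≤ h) (hβ : MemB β) (hv : 0 ≤ v) (hvu : v ≤ u) : 0 ≤ Phi h β u v :=
  (hβ.2.1 u v hv hvu).trans (le_phi hh hβ hv hvu)

theorem phi_le_add (hh : 0 ≤ h) (hβ : MemB β) (hv : 0 ≤ v) (hvw : v ≤ w) (hwu : w ≤ u) :
    Phi h β u v ≤ Phi h β u w + Phi h β w v := by
  refine phi_le_of_forall (by linarith) fun z ⟨hz0, hzu⟩ => ?_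
  rcases le_total z w with hzw | hwz
  · calc extendBelow h β (u - z) (v - z)
        ≤ extendBelow h β (u - z) (w - z) + extendBelow h β (w - z) (v - z) :=
          extendBelow_le_add hβ (by linarith) (by linarith) (by linarith)
      _ ≤ Phi h β u w + Phi h β w v :=
          add_le_add (extendBelow_le_phi hh hβ hwu ⟨hz0, hzu⟩)
            (extendBelow_le_phi hh hβ hvw ⟨hz0, hzw⟩)
  · -- past `w`, the segment of `(u, v)` is that of `(u, w)` shifted down by `w - v`
    calc extendBelow h β (u - z) (v - z)
        = extendBelow h β (u - z) (w - z) + h * (w - v) := by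
          rw [← extendBelow_sub_of_nonpos (by linarith) (by linarith), sub_sub_sub_cancel_left]
      _ ≤ Phi h β u w + Phi h β w v :=
          add_le_add (extendBelow_le_phi hh hβ hwu ⟨hz0, hzu⟩) (mul_sub_le_phi hh hβ hv hvw)

theorem phi_mono_left (hh : 0 ≤ h) (hβ : MemB β) (hv : 0 ≤ v) (hvw : v ≤ w) (hwu : w ≤ u) :
    Phi h β w v ≤ Phi h β u v :=
  phi_le_of_forall (hv.trans hvw) fun z ⟨hz0, hzw⟩ =>
    (extendBelow_mono_left hβ (by linarith) (by linarith) (by linarith)).trans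
      (extendBelow_le_phi hh hβ (hvw.trans hwu) ⟨hz0, hzw.trans hwu⟩)

theorem phi_anti_right (hh : 0 ≤ h) (hβ : MemB β) (hv : 0 ≤ v) (hvw : v ≤ w) (hwu : w ≤ u) :
    Phi h β u w ≤ Phi h β u v :=
  phi_le_of_forall (by linarith) fun z ⟨hz0, hzu⟩ =>
    (extendBelow_anti_right hh hβ (by linarith) (by linarith) (by linarith)).trans
      (extendBelow_le_phi hh hβ (hvw.trans hwu) ⟨hz0, hzu⟩)

theorem phi_le_phi_add (hh : 0 ≤ h) (hhα : h ≤ α) (hβ : MemBLip α β) (hu : 0 ≤ u)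
    (hvu : v ≤ u) (hv' : 0 ≤ v') (hvu' : v' ≤ u') :
    Phi h β u v ≤ Phi h β u' v' + α * (|u - u'| + |v - v'|) := by
  refine phi_le_of_forall hu fun z ⟨hz0, hzu⟩ => ?_
  -- compare with the nearest point of the segment of `(u', v')`
  obtain ⟨z', hz', hdist⟩ : ∃ z' ∈ Icc 0 u',
      |(u - z) - (u' - z')| + |(v - z) - (v' - z')| ≤ |u - u'| + |v - v'| := by
    rcases le_total z u' with hzu' | hu'z
    · refine ⟨z, ⟨hz0, hzu'⟩, ?_⟩
      rw [sub_sub_sub_cancel_right, sub_sub_sub_cancel_right]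
    · refine ⟨u', ⟨hv'.trans hvu', le_rfl⟩, ?_⟩
      have := abs_sub (v - v') (z - u')
      rw [abs_of_nonneg (sub_nonneg.2 hu'z)] at this
      rw [sub_self, sub_zero, abs_of_nonneg (sub_nonneg.2 hzu),
        abs_of_nonneg (by linarith : 0 ≤ u - u'),
        show v - z - (v' - u') = v - v' - (z - u') by ring]
      linarith
  have hext := (abs_sub_le_iff.1 (abs_extendBelow_sub_le hh hhα hβ (a := u - z) (b := v - z)
    (a' := u' - z') (b' := v' - z') (by linarith) (by linarith) (sub_nonneg.2 hz'.2)
    (by linarith))).1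
  have hscaled := mul_le_mul_of_nonneg_left hdist (hh.trans hhα)
  linarith [extendBelow_le_phi hh hβ.1 hvu' hz']

theorem abs_phi_sub_le (hh : 0 ≤ h) (hhα : h ≤ α) (hβ : MemBLip α β) (hv : 0 ≤ v) (hvu : v ≤ u)
    (hv' : 0 ≤ v') (hvu' : v' ≤ u') :
    |Phi h β u v - Phi h β u' v'| ≤ α * (|u - u'| + |v - v'|) := by
  have h₁ := phi_le_phi_add hh hhα hβ (hv.trans hvu) hvu hv' hvu'
  have h₂ := phi_le_phi_add hh hhα hβ (hv'.trans hvu') hvu' hv hvu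
  rw [abs_sub_comm u', abs_sub_comm v'] at h₂
  exact abs_sub_le_iff.2 ⟨by linarith, by linarith⟩

theorem phi_le_phi_add_add (hh : 0 ≤ h) (hβ : MemB β) (hv : 0 ≤ v) (hvu : v ≤ u) (ht : 0 ≤ t) :
    Phi h β u v ≤ Phi h β (u + t) (v + t) :=
  phi_le_of_forall (hv.trans hvu) fun z ⟨hz0, hzu⟩ => by
    have := extendBelow_le_phi hh hβ (u := u + t) (v := v + t) (z := z + t) (by linarith)
      ⟨by linarith, by linarith⟩
    rwa [add_sub_add_right_eq_sub, add_sub_add_right_eq_sub] at this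

theorem mul_sub_le_phi_sub_phi (hh : 0 ≤ h) (hβ : MemB β) (hv : 0 ≤ v) (hvu : v ≤ u) :
    h * (u - v) ≤ Phi h β u 0 - Phi h β v 0 := by
  -- the segment of `(u, 0)` contains that of `(v, 0)` shifted down by `u - v`
  suffices Phi h β v 0 ≤ Phi h β u 0 - h * (u - v) by linarith
  refine phi_le_of_forall hv fun z ⟨hz0, hzv⟩ => ?_
  have := extendBelow_le_phi hh hβ (z := z + (u - v)) (v := 0) (hv.trans hvu)
    ⟨by linarith, by linarith⟩
  rw [show u - (z + (u - v)) = v - z by ring, show 0 - (z + (u - v)) = 0 - z - (u - v) by ring,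
    extendBelow_sub_of_nonpos (by linarith) (by linarith)] at this
  linarith

theorem memBbar_phi (hh : 0 ≤ h) (hhα : h ≤ α) (hβ : MemBLip α β) : MemBbar h α (Phi h β) :=
  ⟨⟨⟨fun _ hu => phi_self hh hβ.1 hu,
      fun _ _ hv hvu => phi_nonneg hh hβ.1 hv hvu,
      fun _ _ _ hv hvw hwu => phi_le_add hh hβ.1 hv hvw hwu,
      fun _ _ _ hv hvw hwu => phi_mono_left hh hβ.1 hv hvw hwu,
      fun _ _ _ hv hvw hwu => phi_anti_right hh hβ.1 hv hvw hwu⟩,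
    fun _ _ _ _ hv hvu hv' hvu' => abs_phi_sub_le hh hhα hβ hv hvu hv' hvu'⟩,
    fun _ _ _ hv hvu ht => phi_le_phi_add_add hh hβ.1 hv hvu ht,
    fun _ _ hv hvu => mul_sub_le_phi_sub_phi hh hβ.1 hv hvu⟩

theorem phi_mono (hh : 0 ≤ h) (hξ : MemB ξ) (hle : ∀ u v, 0 ≤ v → v ≤ u → β u v ≤ ξ u v)
    (hu : 0 ≤ u) (hvu : v ≤ u) : Phi h β u v ≤ Phi h ξ u v :=
  phi_le_of_forall hu fun z hz =>
    (extendBelow_mono hle (sub_nonneg.2 hz.2) (by linarith)).trans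
      (extendBelow_le_phi hh hξ hvu hz)

theorem phi_le_self_of_memBbar (hξ : MemBbar h α ξ) (hv : 0 ≤ v) (hvu : v ≤ u) :
    Phi h ξ u v ≤ ξ u v :=
  phi_le_of_forall (hv.trans hvu) fun _ hz => extendBelow_le_of_memBbar hξ hv hvu hz

theorem phi_eq_self_of_memBbar (hh : 0 ≤ h) (hξ : MemBbar h α ξ) (hv : 0 ≤ v) (hvu : v ≤ u) :
    Phi h ξ u v = ξ u v :=
  le_antisymm (phi_le_self_of_memBbar hξ hv hvu) (le_phi hh hξ.1.1 hv hvu)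

end Projection

/-- `Φ_h(β)` is the least element of `𝓑̄_h(α)` dominating `β`; consequently `Φ_h` is a
surjective idempotent projection of `𝓑(α)` onto `𝓑̄_h(α)` which is the identity on
`𝓑̄_h(α)`. -/
theorem Phi_least_dominating (h α : ℝ) (hh : 0 ≤ h) (hhα : h ≤ α)
    (β : ℝ → ℝ → ℝ) (hβ : MemBLip α β) :
    MemBbar h α (Phi h β) ∧
    (∀ u v, 0 ≤ v → v ≤ u → β u v ≤ Phi h β u v) ∧
    (∀ ξ : ℝ → ℝ → ℝ, MemBbar h α ξ → (∀ u v, 0 ≤ v → v ≤ u → β u v ≤ ξ u v) →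
      ∀ u v, 0 ≤ v → v ≤ u → Phi h β u v ≤ ξ u v) ∧
    (MemBbar h α β → ∀ u v, 0 ≤ v → v ≤ u → Phi h β u v = β u v) ∧
    (∀ u v, 0 ≤ v → v ≤ u → Phi h (Phi h β) u v = Phi h β u v) :=
  ⟨memBbar_phi hh hhα hβ,
    fun _ _ hv hvu => le_phi hh hβ.1 hv hvu,
    fun _ hξ hle _ _ hv hvu =>
      (phi_mono hh hξ.1.1 hle (hv.trans hvu) hvu).trans (phi_le_self_of_memBbar hξ hv hvu),
    fun hβ' _ _ hv hvu => phi_eq_self_of_memBbar hh hβ' hv hvu,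
    fun _ _ hv hvu => phi_eq_self_of_memBbar hh (memBbar_phi hh hhα hβ) hv hvu⟩
end

section
/- Fix 0 ≤ h ≤ α, κ ∈ [0,α], and λ ∈ [0,1]. Define h_{κ,λ}(θ) = κ(1−θ) for θ ≥ λ and h_{κ,λ}(θ) = κ(1−λ) for θ ≤ λ. Then h_{κ,λ} ∈ 𝓖̄_0(α). Moreover, if ψ ∈ 𝓖̄_h(α) satisfies h_{κ,λ}(λ) ≤ ψ(λ), then h_{κ,λ}(θ) ≤ ψ(θ) for all θ ∈ [0,1]. -/
/-
`h_{κ,λ}(θ) = κ (1 - max θ λ)` is the smallest function with value `κ (1 - λ)` at `λ` that is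
decreasing and has `θ ↦ γ(θ)/(1-θ)` increasing: decreasing forces the plateau left of `λ`, and
the increasing ratio forces `γ(θ) ≥ (1 - θ) γ(λ)/(1 - λ)` right of `λ`. Its own membership in
`𝓖̄_0(α)` reduces to elementary inequalities between maxima.
-/

open Set Filter

noncomputable def plateauLinear (κ lam θ : ℝ) : ℝ :=
  κ * (1 - max θ lam)

section plateauLinear

variable {κ lam : ℝ}

theorem plateauLinear_eq_ite (θ : ℝ) :
    plateauLinear κ lam θ = if θ ≤ lam then κ * (1 - lam) else κ * (1 - θ) := by
  unfold plateauLinear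
  split_ifs with hθ
  · rw [max_eq_right hθ]
  · rw [max_eq_left (not_le.1 hθ).le]

theorem plateauLinear_one (hlam1 : lam ≤ 1) : plateauLinear κ lam 1 = 0 := by
  simp [plateauLinear, max_eq_left hlam1]

theorem plateauLinear_nonneg (hκ : 0 ≤ κ) (hlam1 : lam ≤ 1) {θ : ℝ} (hθ1 : θ ≤ 1) :
    0 ≤ plateauLinear κ lam θ :=
  mul_nonneg hκ (sub_nonneg.2 (max_le hθ1 hlam1))

theorem plateauLinear_antitone (hκ : 0 ≤ κ) : Antitone (plateauLinear κ lam) :=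
  fun _ _ hab => mul_le_mul_of_nonneg_left (sub_le_sub_left (max_le_max_right lam hab) 1) hκ

theorem abs_plateauLinear_sub_le (hκ : 0 ≤ κ) (a b : ℝ) :
    |plateauLinear κ lam a - plateauLinear κ lam b| ≤ κ * |a - b| := by
  have hdiff : plateauLinear κ lam a - plateauLinear κ lam b = κ * (max b lam - max a lam) := by
    unfold plateauLinear; ring
  rw [hdiff, abs_mul, abs_of_nonneg hκ, abs_sub_comm a b]
  exact mul_le_mul_of_nonneg_left (abs_max_sub_max_le_abs b a lam) hκ

theorem max_add_mul_max_le_max_mul_add (hlam1 : lam ≤ 1) {l t : ℝ} (hl0 : 0 ≤ l)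
    (hl1 : l ≤ 1) (ht0 : 0 ≤ t) (ht1 : t ≤ 1) :
    max t lam + t * max l lam ≤ max (l * t) lam + t := by
  rcases le_total t lam with htl | hlt <;> rcases le_total l lam with hll | hll <;>
    rcases le_total (l * t) lam with hltl | hltl <;>
    simp only [max_eq_left, max_eq_right, *] <;>
    nlinarith [mul_nonneg ht0 (sub_nonneg.2 hlam1), mul_nonneg ht0 (sub_nonneg.2 hl1),
      mul_nonneg hl0 (sub_nonneg.2 ht1)]

theorem plateauLinear_mul_le (hκ : 0 ≤ κ) (hlam1 : lam ≤ 1) {l t : ℝ} (hl0 : 0 ≤ l)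
    (hl1 : l ≤ 1) (ht0 : 0 ≤ t) (ht1 : t ≤ 1) :
    plateauLinear κ lam (l * t) ≤ plateauLinear κ lam t + t * plateauLinear κ lam l := by
  unfold plateauLinear
  nlinarith [mul_le_mul_of_nonneg_left (max_add_mul_max_le_max_mul_add hlam1 hl0 hl1 ht0 ht1) hκ]

theorem plateauLinear_div_one_sub_le (hκ : 0 ≤ κ) (hlam1 : lam ≤ 1) {a b : ℝ} (hab : a ≤ b)
    (hb1 : b < 1) :
    plateauLinear κ lam a / (1 - a) ≤ plateauLinear κ lam b / (1 - b) := by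
  rw [div_le_div_iff₀ (by linarith) (by linarith)]
  unfold plateauLinear
  rcases le_total a lam with hal | hal <;> rcases le_total b lam with hbl | hbl <;>
    simp only [max_eq_left, max_eq_right, *] <;>
    nlinarith [mul_nonneg hκ (sub_nonneg.2 hab), mul_nonneg hκ (sub_nonneg.2 hlam1),
      mul_nonneg hκ (sub_nonneg.2 (hab.trans hb1.le)), mul_nonneg hκ (sub_nonneg.2 hb1.le)]

theorem memGbar_plateauLinear {α : ℝ} (hκ0 : 0 ≤ κ) (hκα : κ ≤ α) (hlam1 : lam ≤ 1) :
    MemGbar 0 α (plateauLinear κ lam) := by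
  refine ⟨⟨⟨plateauLinear_one hlam1, ?_, ?_, ?_⟩, ?_⟩, ?_, ?_⟩
  · exact fun θ _ hθ1 => plateauLinear_nonneg hκ0 hlam1 hθ1
  · exact fun a b _ hab _ => plateauLinear_antitone hκ0 hab
  · exact fun l t hl0 hl1 ht0 ht1 => plateauLinear_mul_le hκ0 hlam1 hl0 hl1 ht0 ht1
  · exact fun a b _ _ _ _ => (abs_plateauLinear_sub_le hκ0 a b).trans
      (mul_le_mul_of_nonneg_right hκα (abs_nonneg _))
  · exact plateauLinear_nonneg hκ0 hlam1 zero_le_one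
  · exact fun a b _ hab hb1 => plateauLinear_div_one_sub_le hκ0 hlam1 hab hb1

theorem plateauLinear_le_of_memGbar {h α : ℝ} {ψ : ℝ → ℝ} (hψ : MemGbar h α ψ)
    (hlam0 : 0 ≤ lam) (hlam1 : lam ≤ 1) (hdom : κ * (1 - lam) ≤ ψ lam) {θ : ℝ} (hθ0 : 0 ≤ θ)
    (hθ1 : θ ≤ 1) :
    plateauLinear κ lam θ ≤ ψ θ := by
  obtain ⟨⟨⟨hψ1, -, hψanti, -⟩, -⟩, -, hψratio⟩ := hψ
  rw [plateauLinear_eq_ite]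
  split_ifs with hθlam
  · exact hdom.trans (hψanti θ lam hθ0 hθlam hlam1)
  rcases hθ1.lt_or_eq with hθ1 | rfl
  · have hratio := hψratio lam θ hlam0 (not_le.1 hθlam).le hθ1
    rw [div_le_div_iff₀ (by linarith) (by linarith)] at hratio
    nlinarith [mul_le_mul_of_nonneg_right hdom (sub_nonneg.2 hθ1.le)]
  · simp [hψ1]

end plateauLinear

theorem minimal_elements_general (h α κ lam : ℝ)
    (hκ0 : 0 ≤ κ) (hκα : κ ≤ α) (hlam0 : 0 ≤ lam) (hlam1 : lam ≤ 1) :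
    MemGbar 0 α (fun θ => if θ ≤ lam then κ * (1 - lam) else κ * (1 - θ)) ∧
    ∀ ψ : ℝ → ℝ, MemGbar h α ψ →
      κ * (1 - lam) ≤ ψ lam →
      ∀ θ, 0 ≤ θ → θ ≤ 1 →
        (if θ ≤ lam then κ * (1 - lam) else κ * (1 - θ)) ≤ ψ θ := by
  simp only [← plateauLinear_eq_ite]
  exact ⟨memGbar_plateauLinear hκ0 hκα hlam1,
    fun ψ hψ hdom θ hθ0 hθ1 => plateauLinear_le_of_memGbar hψ hlam0 hlam1 hdom hθ0 hθ1⟩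

/-- The minimal functions `h_{κ,λ}` belong to `𝓖̄_0(α)`, and if `ψ ∈ 𝓖̄_h(α)` dominates
`h_{κ,λ}` at `λ`, then it dominates `h_{κ,λ}` everywhere on `[0,1]`. -/
theorem minimal_elements (h α κ lam : ℝ) (hh : 0 ≤ h) (hhα : h ≤ α)
    (hκ0 : 0 ≤ κ) (hκα : κ ≤ α) (hlam0 : 0 ≤ lam) (hlam1 : lam ≤ 1) :
    MemGbar 0 α (fun θ => if θ ≤ lam then κ * (1 - lam) else κ * (1 - θ)) ∧
    ∀ ψ : ℝ → ℝ, MemGbar h α ψ →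
      κ * (1 - lam) ≤ ψ lam →
      ∀ θ, 0 ≤ θ → θ ≤ 1 →
        (if θ ≤ lam then κ * (1 - lam) else κ * (1 - θ)) ≤ ψ θ :=
  minimal_elements_general h α κ lam hκ0 hκα hlam0 hlam1
end

section
/- Let 0 ≤ h ≤ α and γ ∈ 𝓖(α). Define Ω_h(γ)(θ) = (1−θ)·max{h, max_{0 ≤ λ ≤ θ} γ(λ)/(1−λ)} (interpreting γ(λ)/(1−λ) at λ=1 as its limit). Then Ω_h(γ) ∈ 𝓖̄_h(α) and Ω_h(γ) = inf{ξ ∈ 𝓖̄_h(α) : ξ ≥ γ}. In particular Ω_h : 𝓖(α) → 𝓖̄_h(α) is surjective, idempotent, and the identity on 𝓖̄_h(α). -/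
open Set Filter

/-- Auxiliary: the inner max function in `Om`. -/
noncomputable def Mfun (h : ℝ) (γ : ℝ → ℝ) (θ : ℝ) : ℝ :=
  max h (sSup ((fun l => γ l / (1 - l)) '' Set.Icc 0 θ))

lemma Om_eq (h : ℝ) (γ : ℝ → ℝ) (θ : ℝ) : Om h γ θ = (1 - θ) * Mfun h γ θ := rfl

lemma Om_main (h α : ℝ) (hh : 0 ≤ h) (hhα : h ≤ α)
    (γ : ℝ → ℝ) (hγ : MemGLip α γ) :
    MemGbar h α (Om h γ) ∧ (∀ θ, 0 ≤ θ → θ ≤ 1 → γ θ ≤ Om h γ θ) := by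
  obtain ⟨⟨hγ1, hγnn, hγanti, hγsub⟩, hlip⟩ := hγ
  set f : ℝ → ℝ := fun l => γ l / (1 - l) with hf
  have hfnn : ∀ l, 0 ≤ l → l ≤ 1 → 0 ≤ f l := fun l h0 h1 =>
    div_nonneg (hγnn l h0 h1) (by linarith)
  have hfα : ∀ l, 0 ≤ l → l ≤ 1 → f l ≤ α := by
    intro l h0 h1
    rcases eq_or_lt_of_le h1 with h1' | h1'
    · subst h1'; simp [hf, hγ1]; linarith
    · have h2 : (0:ℝ) < 1 - l := by linarith
      show γ l / (1 - l) ≤ α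
      rw [div_le_iff₀ h2]
      have := hlip l 1 h0 h1 zero_le_one le_rfl
      rw [hγ1, sub_zero, abs_of_nonneg (hγnn l h0 h1),
        abs_of_nonpos (by linarith), neg_sub] at this
      linarith
  have hbdd : ∀ θ : ℝ, θ ≤ 1 → BddAbove (f '' Set.Icc 0 θ) := by
    intro θ hθ
    exact ⟨α, by rintro x ⟨l, ⟨hl0, hl1⟩, rfl⟩; exact hfα l hl0 (hl1.trans hθ)⟩
  have hne : ∀ θ : ℝ, 0 ≤ θ → (f '' Set.Icc 0 θ).Nonempty :=
    fun θ hθ => ⟨f 0, ⟨0, ⟨le_rfl, hθ⟩, rfl⟩⟩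
  have hM : ∀ θ, Mfun h γ θ = max h (sSup (f '' Set.Icc 0 θ)) := fun θ => rfl
  have hMmono : ∀ a b, 0 ≤ a → a ≤ b → b ≤ 1 → Mfun h γ a ≤ Mfun h γ b := by
    intro a b ha hab hb1
    rw [hM, hM]
    exact max_le_max le_rfl (csSup_le_csSup (hbdd b hb1) (hne a ha)
      (Set.image_mono (Set.Icc_subset_Icc le_rfl hab)))
  have hMα : ∀ θ, 0 ≤ θ → θ ≤ 1 → Mfun h γ θ ≤ α := by
    intro θ h0 h1
    rw [hM]
    refine max_le hhα (csSup_le (hne θ h0) ?_)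
    rintro x ⟨l, ⟨hl0, hl1⟩, rfl⟩
    exact hfα l hl0 (hl1.trans h1)
  have hhM : ∀ θ, h ≤ Mfun h γ θ := fun θ => le_max_left _ _
  have hMnn : ∀ θ, 0 ≤ Mfun h γ θ := fun θ => hh.trans (hhM θ)
  have hfleM : ∀ θ l, 0 ≤ l → l ≤ θ → θ ≤ 1 → f l ≤ Mfun h γ θ := by
    intro θ l hl0 hlθ hθ1
    rw [hM]
    exact le_trans (le_csSup (hbdd θ hθ1) ⟨l, ⟨hl0, hlθ⟩, rfl⟩) (le_max_right _ _)
  have hγleOm : ∀ θ, 0 ≤ θ → θ ≤ 1 → γ θ ≤ (1 - θ) * Mfun h γ θ := by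
    intro θ h0 h1
    rcases eq_or_lt_of_le h1 with h1' | h1'
    · subst h1'; simp [hγ1]
    · have h2 : (0:ℝ) < 1 - θ := by linarith
      have hfM : f θ ≤ Mfun h γ θ := hfleM θ θ h0 le_rfl h1
      have hfeq : γ θ = (1 - θ) * f θ := by
        rw [hf]; field_simp
      nlinarith [mul_le_mul_of_nonneg_left hfM h2.le]
  have hanti : ∀ a b, 0 ≤ a → a ≤ b → b ≤ 1 →
      (1 - b) * Mfun h γ b ≤ (1 - a) * Mfun h γ a := by
    intro a b ha hab hb1
    have ha1 : a ≤ 1 := hab.trans hb1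
    have hOma_nn : 0 ≤ (1 - a) * Mfun h γ a := mul_nonneg (by linarith) (hMnn a)
    have hbranch1 : (1 - b) * h ≤ (1 - a) * Mfun h γ a :=
      mul_le_mul (by linarith) (hhM a) hh (by linarith)
    have hbranch2 : (1 - b) * sSup (f '' Set.Icc 0 b) ≤ (1 - a) * Mfun h γ a := by
      rcases eq_or_lt_of_le hb1 with hb' | hb'
      · subst hb'; simpa using hOma_nn
      · have h2 : (0:ℝ) < 1 - b := by linarith
        rw [mul_comm, ← le_div_iff₀ h2]
        refine csSup_le (hne b (ha.trans hab)) ?_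
        rintro x ⟨l, ⟨hl0, hlb⟩, rfl⟩
        rw [le_div_iff₀ h2]
        have hl1 : l ≤ 1 := hlb.trans hb1
        have hfnn' := hfnn l hl0 hl1
        rcases le_or_gt l a with hla | hla
        · have hfM : f l ≤ Mfun h γ a := hfleM a l hl0 hla ha1
          nlinarith
        · have hkey : f l * (1 - l) ≤ γ a := by
            rcases eq_or_lt_of_le hl1 with hl' | hl'
            · subst hl'; simpa using hγnn a ha ha1
            · have h3 : (0:ℝ) < 1 - l := by linarith
              have heq : f l * (1 - l) = γ l := div_mul_cancel₀ _ h3.ne'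
              rw [heq]; exact hγanti a l ha hla.le hl1
          have hγa := hγleOm a ha ha1
          nlinarith
    calc (1 - b) * Mfun h γ b = max ((1 - b) * h) ((1 - b) * sSup (f '' Set.Icc 0 b)) := by
          rw [hM]; exact mul_max_of_nonneg _ _ (by linarith)
      _ ≤ (1 - a) * Mfun h γ a := max_le hbranch1 hbranch2
  have hOmnn : ∀ θ, 0 ≤ θ → θ ≤ 1 → 0 ≤ Om h γ θ := by
    intro θ h0 h1
    rw [Om_eq]
    exact mul_nonneg (by linarith) (hMnn θ)
  refine ⟨⟨⟨⟨?_, ?_, ?_, ?_⟩, ?_⟩, ?_, ?_⟩, ?_⟩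
  · -- Om 1 = 0
    rw [Om_eq]; ring
  · exact hOmnn
  · intro a b ha hab hb1
    rw [Om_eq, Om_eq]
    exact hanti a b ha hab hb1
  · -- subadditivity
    intro l t hl0 hl1 ht0 ht1
    rw [Om_eq, Om_eq, Om_eq]
    have h1 : Mfun h γ (l * t) ≤ Mfun h γ t :=
      hMmono _ _ (mul_nonneg hl0 ht0) (by nlinarith) ht1
    have h2 : Mfun h γ (l * t) ≤ Mfun h γ l :=
      hMmono _ _ (mul_nonneg hl0 ht0) (by nlinarith) hl1
    have h3 := hMnn (l * t)
    nlinarith [mul_le_mul_of_nonneg_left h1 (by linarith : (0:ℝ) ≤ 1 - t),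
      mul_le_mul_of_nonneg_left h2 (mul_nonneg ht0 (by linarith : (0:ℝ) ≤ 1 - l))]
  · -- Lipschitz
    have key : ∀ a b, 0 ≤ a → a ≤ b → b ≤ 1 →
        (1 - a) * Mfun h γ a - (1 - b) * Mfun h γ b ≤ α * (b - a) := by
      intro a b ha hab hb1
      have hMab := hMmono a b ha hab hb1
      have hMbα := hMα b (ha.trans hab) hb1
      have hMa0 := hMnn a
      nlinarith [mul_le_mul_of_nonneg_left hMab (by linarith : (0:ℝ) ≤ 1 - a),
        mul_le_mul_of_nonneg_left hMbα (by linarith : (0:ℝ) ≤ b - a)]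
    intro a b ha ha1 hb hb1
    rw [Om_eq, Om_eq]
    rcases le_total a b with hab | hab
    · rw [abs_of_nonneg (by linarith [hanti a b ha hab hb1]),
        abs_of_nonpos (by linarith : a - b ≤ 0), neg_sub]
      exact key a b ha hab hb1
    · rw [abs_of_nonpos (by linarith [hanti b a hb hab ha1]),
        abs_of_nonneg (by linarith : 0 ≤ a - b), neg_sub]
      have := key b a hb hab ha1
      linarith
  · -- h ≤ Om 0
    rw [Om_eq]
    have := hhM 0
    linarith
  · -- ratio monotone
    intro a b ha hab hb
    rw [Om_eq, Om_eq,
      mul_div_cancel_left₀ _ (by linarith : (1:ℝ) - a ≠ 0),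
      mul_div_cancel_left₀ _ (by linarith : (1:ℝ) - b ≠ 0)]
    exact hMmono a b ha hab hb.le
  · intro θ h0 h1
    rw [Om_eq]
    exact hγleOm θ h0 h1

lemma Om_least (h α : ℝ) (hh : 0 ≤ h) (hhα : h ≤ α)
    (γ : ℝ → ℝ) (hγ : MemGLip α γ) (ξ : ℝ → ℝ) (hξ : MemGbar h α ξ)
    (hge : ∀ θ, 0 ≤ θ → θ ≤ 1 → γ θ ≤ ξ θ) :
    ∀ θ, 0 ≤ θ → θ ≤ 1 → Om h γ θ ≤ ξ θ := by
  obtain ⟨⟨⟨hξ1, hξnn, hξanti, hξsub⟩, hξlip⟩, hξh, hξratio⟩ := hξ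
  intro θ h0 h1
  rcases eq_or_lt_of_le h1 with h1' | h1'
  · subst h1'
    have : Om h γ 1 = 0 := by rw [Om_eq]; ring
    rw [this, hξ1]
  · have h2 : (0:ℝ) < 1 - θ := by linarith
    have hb1 : Mfun h γ θ ≤ ξ θ / (1 - θ) := by
      refine max_le ?_ ?_
      · have hr := hξratio 0 θ le_rfl h0 h1'
        rw [sub_zero, div_one] at hr
        have := div_nonneg (hξnn θ h0 h1) h2.le
        calc h ≤ ξ 0 := hξh
          _ ≤ ξ θ / (1 - θ) := hr
      · refine csSup_le ⟨γ 0 / (1 - 0), ⟨0, ⟨le_rfl, h0⟩, rfl⟩⟩ ?_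
        rintro x ⟨l, ⟨hl0, hlθ⟩, rfl⟩
        have hl1 : l < 1 := lt_of_le_of_lt hlθ h1'
        have h3 : (0:ℝ) < 1 - l := by linarith
        calc γ l / (1 - l) ≤ ξ l / (1 - l) :=
              (div_le_div_iff_of_pos_right h3).mpr (hge l hl0 hl1.le)
          _ ≤ ξ θ / (1 - θ) := hξratio l θ hl0 hlθ h1'
    calc Om h γ θ = (1 - θ) * Mfun h γ θ := rfl
      _ ≤ (1 - θ) * (ξ θ / (1 - θ)) := mul_le_mul_of_nonneg_left hb1 h2.le
      _ = ξ θ := by field_simp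

/-- `Ω_h(γ)` is the least element of `𝓖̄_h(α)` dominating `γ`; consequently `Ω_h` is a
surjective idempotent projection of `𝓖(α)` onto `𝓖̄_h(α)` which is the identity on
`𝓖̄_h(α)`. -/
theorem Om_least_dominating (h α : ℝ) (hh : 0 ≤ h) (hhα : h ≤ α)
    (γ : ℝ → ℝ) (hγ : MemGLip α γ) :
    MemGbar h α (Om h γ) ∧
    (∀ θ, 0 ≤ θ → θ ≤ 1 → γ θ ≤ Om h γ θ) ∧
    (∀ ξ : ℝ → ℝ, MemGbar h α ξ → (∀ θ, 0 ≤ θ → θ ≤ 1 → γ θ ≤ ξ θ) →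
      ∀ θ, 0 ≤ θ → θ ≤ 1 → Om h γ θ ≤ ξ θ) ∧
    (MemGbar h α γ → ∀ θ, 0 ≤ θ → θ ≤ 1 → Om h γ θ = γ θ) ∧
    (∀ θ, 0 ≤ θ → θ ≤ 1 → Om h (Om h γ) θ = Om h γ θ) := by
  obtain ⟨hmem, hdom⟩ := Om_main h α hh hhα γ hγ
  refine ⟨hmem, hdom, Om_least h α hh hhα γ hγ, ?_, ?_⟩
  · intro hγbar θ h0 h1
    exact le_antisymm (Om_least h α hh hhα γ hγ γ hγbar (fun t _ _ => le_rfl) θ h0 h1)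
      (hdom θ h0 h1)
  · intro θ h0 h1
    obtain ⟨hmem2, hdom2⟩ := Om_main h α hh hhα (Om h γ) hmem.1
    exact le_antisymm
      (Om_least h α hh hhα (Om h γ) hmem.1 (Om h γ) hmem (fun t _ _ => le_rfl) θ h0 h1)
      (hdom2 θ h0 h1)
end

section
/- Let ψ ∈ 𝓑̄_h(α), i.e., ψ ∈ 𝓑(α) with ψ(u+z,v+z) ≥ ψ(u,v) for all z ≥ 0 and ψ(u,0) − ψ(v,0) ≥ h(u−v). Then γ = Γ(ψ), where Γ(ψ)(θ) = limsup_{u→∞} ψ(u,θu)/u, satisfies γ(0) ≥ h and the function θ ↦ γ(θ)/(1−θ) is increasing on [0,1); i.e., γ ∈ 𝓖̄_h(α). -/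
open Set Filter

namespace GamAux

variable {l : Filter ℝ} [l.NeBot]

omit [l.NeBot] in
lemma bddAbove_of_ev {g : ℝ → ℝ} {C : ℝ} (h : ∀ᶠ u in l, g u ≤ C) :
    IsBoundedUnder (· ≤ ·) l g := isBoundedUnder_of_eventually_le h

lemma cobdd_of_ev {g : ℝ → ℝ} {c : ℝ} (h : ∀ᶠ u in l, c ≤ g u) :
    IsCoboundedUnder (· ≤ ·) l g :=
  (isBoundedUnder_of_eventually_ge h).isCoboundedUnder_le

lemma limsup_comp_le {g m : ℝ → ℝ} (hm : Tendsto m atTop atTop)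
    {c C : ℝ} (h0 : ∀ᶠ u in atTop, c ≤ g u) (hC : ∀ᶠ u in atTop, g u ≤ C) :
    limsup (fun u => g (m u)) atTop ≤ limsup g atTop := by
  have h1 : limsup (fun u => g (m u)) atTop = limsup g (map m atTop) := by
    simp only [limsup, map_map]; rfl
  rw [h1]
  haveI : (map m atTop).NeBot := map_neBot
  refine limsSup_le_limsSup_of_le (map_mono hm) ?_ ?_
  · exact cobdd_of_ev (hm.eventually h0)
  · exact bddAbove_of_ev hC

lemma limsup_cmul_le {c : ℝ} (hc : 0 < c) {g : ℝ → ℝ} {b C : ℝ}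
    (h0 : ∀ᶠ u in l, b ≤ g u) (hC : ∀ᶠ u in l, g u ≤ C) :
    limsup (fun u => c * g u) l ≤ c * limsup g l := by
  have hb : IsBoundedUnder (· ≤ ·) l fun u => c * g u :=
    bddAbove_of_ev (hC.mono fun u h => mul_le_mul_of_nonneg_left h hc.le)
  have hcb : IsCoboundedUnder (· ≤ ·) l fun u => c * g u :=
    cobdd_of_ev (h0.mono fun u h => mul_le_mul_of_nonneg_left h hc.le)
  rw [limsup_le_iff hcb hb]
  intro y hy
  have hlt : limsup g l < y / c := by
    rw [lt_div_iff₀ hc, mul_comm]; exact hy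
  filter_upwards [eventually_lt_of_limsup_lt hlt (bddAbove_of_ev hC)] with u hu
  calc c * g u < c * (y / c) := by exact mul_lt_mul_of_pos_left hu hc
    _ = y := by field_simp

lemma limsup_add_const_le {g : ℝ → ℝ} {b C c : ℝ}
    (h0 : ∀ᶠ u in l, b ≤ g u) (hC : ∀ᶠ u in l, g u ≤ C) :
    limsup (fun u => g u + c) l ≤ limsup g l + c := by
  have h := limsup_add_le (f := l) (u := g) (v := fun _ => c)
    (isBoundedUnder_of_eventually_ge h0) (bddAbove_of_ev hC)
    (cobdd_of_ev (Eventually.of_forall fun _ => le_refl c))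
    (bddAbove_of_ev (Eventually.of_forall fun _ => le_refl c))
  rw [limsup_const] at h
  exact h

end GamAux

/-- If `ψ ∈ 𝓑̄_h(α)`, then `Γ(ψ) ∈ 𝓖̄_h(α)`: in particular `Γ(ψ)(0) ≥ h` and
`θ ↦ Γ(ψ)(θ)/(1-θ)` is increasing on `[0,1)`. -/
theorem Gam_descends (h α : ℝ) (hh : 0 ≤ h) (hhα : h ≤ α)
    (ψ : ℝ → ℝ → ℝ) (hψ : MemBbar h α ψ) :
    MemGbar h α (Gam ψ) := by
  obtain ⟨⟨⟨hzero, hnn, hsub, hm1, hm2⟩, hlip⟩, hdiag, hgrow⟩ := hψ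
  set F : ℝ → ℝ → ℝ := fun θ u => ψ u (θ * u) / u with hFdef
  have hGam : ∀ θ, Gam ψ θ = limsup (F θ) atTop := fun θ => rfl
  -- lower bound
  have hlb : ∀ θ : ℝ, 0 ≤ θ → θ ≤ 1 → ∀ᶠ u in atTop, 0 ≤ F θ u := by
    intro θ h0 h1
    filter_upwards [eventually_ge_atTop (1:ℝ)] with u hu
    have hu0 : (0:ℝ) < u := lt_of_lt_of_le one_pos hu
    exact div_nonneg (hnn u (θ*u) (mul_nonneg h0 hu0.le) (by nlinarith)) hu0.le
  -- upper bound
  have hub : ∀ θ : ℝ, 0 ≤ θ → θ ≤ 1 → ∀ᶠ u in atTop, F θ u ≤ α * (1 - θ) := by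
    intro θ h0 h1
    filter_upwards [eventually_ge_atTop (1:ℝ)] with u hu
    have hu0 : (0:ℝ) < u := lt_of_lt_of_le one_pos hu
    have h1' : 0 ≤ θ * u := mul_nonneg h0 hu0.le
    have h2' : θ * u ≤ u := by nlinarith
    have hb := hlip u (θ*u) u u h1' h2' hu0.le le_rfl
    rw [hzero u hu0.le, sub_zero, sub_self, abs_zero,
      abs_of_nonneg (hnn u (θ*u) h1' h2'),
      abs_of_nonpos (by nlinarith : θ*u - u ≤ 0)] at hb
    show ψ u (θ*u) / u ≤ α * (1 - θ)
    rw [div_le_iff₀ hu0]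
    nlinarith
  have hBdd : ∀ θ : ℝ, 0 ≤ θ → θ ≤ 1 → IsBoundedUnder (· ≤ ·) atTop (F θ) :=
    fun θ h0 h1 => GamAux.bddAbove_of_ev (hub θ h0 h1)
  have hCob : ∀ θ : ℝ, 0 ≤ θ → θ ≤ 1 → IsCoboundedUnder (· ≤ ·) atTop (F θ) :=
    fun θ h0 h1 => GamAux.cobdd_of_ev (hlb θ h0 h1)
  -- γ 1 = 0
  have hγ1 : Gam ψ 1 = 0 := by
    rw [hGam]
    have hev : ∀ᶠ u in atTop, F 1 u = (fun _ : ℝ => (0:ℝ)) u := by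
      filter_upwards [eventually_ge_atTop (0:ℝ)] with u hu
      show ψ u (1*u) / u = 0
      rw [one_mul, hzero u hu, zero_div]
    rw [limsup_congr hev, limsup_const]
  -- nonneg
  have hγnn : ∀ θ, 0 ≤ θ → θ ≤ 1 → 0 ≤ Gam ψ θ := by
    intro θ h0 h1
    rw [hGam]
    exact le_limsup_of_frequently_le ((hlb θ h0 h1).frequently) (hBdd θ h0 h1)
  -- antitone
  have hγanti : ∀ a b, 0 ≤ a → a ≤ b → b ≤ 1 → Gam ψ b ≤ Gam ψ a := by
    intro a b ha hab hb1
    rw [hGam, hGam]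
    refine limsup_le_limsup ?_ (hCob b (ha.trans hab) hb1) (hBdd a ha (hab.trans hb1))
    filter_upwards [eventually_ge_atTop (1:ℝ)] with u hu
    have hu0 : (0:ℝ) < u := lt_of_lt_of_le one_pos hu
    have := hm2 u (b*u) (a*u) (mul_nonneg ha hu0.le)
      (by nlinarith) (by nlinarith)
    show ψ u (b*u)/u ≤ ψ u (a*u)/u
    gcongr
  -- one-sided Lipschitz
  have hlipkey : ∀ a b, 0 ≤ a → a ≤ 1 → 0 ≤ b → b ≤ 1 →
      Gam ψ a ≤ Gam ψ b + α * |a - b| := by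
    intro a b ha ha1 hb hb1
    rw [hGam, hGam]
    have hev : ∀ᶠ u in atTop, F a u ≤ F b u + α * |a - b| := by
      filter_upwards [eventually_ge_atTop (1:ℝ)] with u hu
      have hu0 : (0:ℝ) < u := lt_of_lt_of_le one_pos hu
      have hl := hlip u (a*u) u (b*u) (mul_nonneg ha hu0.le) (by nlinarith)
        (mul_nonneg hb hu0.le) (by nlinarith)
      rw [sub_self, abs_zero, zero_add] at hl
      have habs : |a*u - b*u| = |a-b| * u := by
        rw [← sub_mul, abs_mul, abs_of_pos hu0]
      rw [habs] at hl
      have h2 := (abs_le.mp hl).2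
      have h3 : ψ u (a*u) ≤ ψ u (b*u) + α * |a-b| * u := by nlinarith
      show ψ u (a*u)/u ≤ ψ u (b*u)/u + α * |a-b|
      calc ψ u (a*u)/u ≤ (ψ u (b*u) + α * |a-b| * u)/u := by gcongr
        _ = ψ u (b*u)/u + α * |a-b| := by field_simp
    calc limsup (F a) atTop ≤ limsup (fun u => F b u + α * |a - b|) atTop := by
          have hbb : ∀ᶠ u in atTop, F b u + α * |a - b| ≤ α * (1 - b) + α * |a - b| :=
            (hub b hb hb1).mono fun u hx => by linarith
          exact limsup_le_limsup hev (hCob a ha ha1) (GamAux.bddAbove_of_ev hbb)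
      _ ≤ limsup (F b) atTop + α * |a - b| :=
          GamAux.limsup_add_const_le (hlb b hb hb1) (hub b hb hb1)
  have hγlip : ∀ a b, 0 ≤ a → a ≤ 1 → 0 ≤ b → b ≤ 1 →
      |Gam ψ a - Gam ψ b| ≤ α * |a - b| := by
    intro a b ha ha1 hb hb1
    rw [abs_sub_le_iff]
    constructor
    · linarith [hlipkey a b ha ha1 hb hb1]
    · have h2 := hlipkey b a hb hb1 ha ha1
      rw [abs_sub_comm b a] at h2
      linarith
  -- submultiplicative
  have hγmul : ∀ lam t, 0 ≤ lam → lam ≤ 1 → 0 ≤ t → t ≤ 1 →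
      Gam ψ (lam * t) ≤ Gam ψ t + t * Gam ψ lam := by
    intro lam t hl0 hl1 ht0 ht1
    rcases eq_or_lt_of_le ht0 with heq | ht0'
    · rw [← heq]; simp
    · have hmt : Tendsto (fun u => t * u) atTop atTop :=
        Tendsto.const_mul_atTop ht0' tendsto_id
      have hevcomp0 := hmt.eventually (hlb lam hl0 hl1)
      have hevcompC := hmt.eventually (hub lam hl0 hl1)
      have hev : ∀ᶠ u in atTop, F (lam*t) u ≤ F t u + t * F lam (t*u) := by
        filter_upwards [eventually_ge_atTop (1:ℝ)] with u hu
        have hu0 : (0:ℝ) < u := lt_of_lt_of_le one_pos hu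
        have hs := hsub u (t*u) (lam*t*u) (by positivity)
          (by nlinarith [mul_nonneg (mul_nonneg (by linarith : (0:ℝ) ≤ 1 - lam) ht0) hu0.le])
          (by nlinarith)
        have heq2 : lam*t*u = lam*(t*u) := by ring
        rw [heq2] at hs
        have heqm : t * (ψ (t*u) (lam*(t*u)) / (t*u)) = ψ (t*u) (lam*(t*u)) / u := by
          field_simp
        show ψ u (lam*t*u)/u ≤ ψ u (t*u)/u + t * (ψ (t*u) (lam*(t*u)) / (t*u))
        rw [heqm, heq2, ← add_div]
        gcongr
      rw [hGam, hGam, hGam]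
      have step1 : limsup (F (lam*t)) atTop ≤
          limsup (fun u => F t u + t * F lam (t*u)) atTop := by
        refine limsup_le_limsup hev (hCob (lam*t) (by positivity) (by nlinarith))
          (GamAux.bddAbove_of_ev (C := α*(1-t) + t*(α*(1-lam))) ?_)
        filter_upwards [hub t ht0 ht1, hevcompC] with u h1 h2
        have := mul_le_mul_of_nonneg_left h2 ht0
        linarith
      have step2 : limsup (fun u => F t u + t * F lam (t*u)) atTop ≤
          limsup (F t) atTop + limsup (fun u => t * F lam (t*u)) atTop :=
        limsup_add_le (isBoundedUnder_of_eventually_ge (hlb t ht0 ht1)) (hBdd t ht0 ht1)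
          (GamAux.cobdd_of_ev (hevcomp0.mono fun u hx => mul_nonneg ht0 hx))
          (GamAux.bddAbove_of_ev (hevcompC.mono fun u hx => mul_le_mul_of_nonneg_left hx ht0))
      have step3 : limsup (fun u => t * F lam (t*u)) atTop ≤ t * limsup (F lam) atTop := by
        calc limsup (fun u => t * F lam (t*u)) atTop
            ≤ t * limsup (fun u => F lam (t*u)) atTop :=
              GamAux.limsup_cmul_le ht0' hevcomp0 hevcompC
          _ ≤ t * limsup (F lam) atTop :=
              mul_le_mul_of_nonneg_left
                (GamAux.limsup_comp_le hmt (hlb lam hl0 hl1) (hub lam hl0 hl1)) ht0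
      linarith
  -- h ≤ γ 0
  have hγ0 : h ≤ Gam ψ 0 := by
    rw [hGam]
    refine le_limsup_of_frequently_le (Eventually.frequently ?_) (hBdd 0 le_rfl zero_le_one)
    filter_upwards [eventually_ge_atTop (1:ℝ)] with u hu
    have hu0 : (0:ℝ) < u := lt_of_lt_of_le one_pos hu
    have hg := hgrow u 0 le_rfl hu0.le
    rw [hzero 0 le_rfl, sub_zero, sub_zero] at hg
    show h ≤ ψ u (0*u)/u
    rw [zero_mul, le_div_iff₀ hu0]
    linarith
  -- ratio monotonicity
  have hγratio : ∀ a b, 0 ≤ a → a ≤ b → b < 1 →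
      Gam ψ a / (1-a) ≤ Gam ψ b / (1-b) := by
    intro a b ha hab hb1
    have hb0 : 0 ≤ b := ha.trans hab
    have h1b : (0:ℝ) < 1 - b := by linarith
    have h1a : (0:ℝ) < 1 - a := by linarith
    set c : ℝ := (1-a)/(1-b) with hc
    have hc0 : 0 < c := div_pos h1a h1b
    have hc1 : 1 ≤ c := (one_le_div h1b).mpr (by linarith)
    have hmc : Tendsto (fun u => c * u) atTop atTop :=
      Tendsto.const_mul_atTop hc0 tendsto_id
    have hevc0 := hmc.eventually (hlb b hb0 hb1.le)
    have hevcC := hmc.eventually (hub b hb0 hb1.le)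
    have hev : ∀ᶠ u in atTop, F a u ≤ c * F b (c*u) := by
      filter_upwards [eventually_ge_atTop (1:ℝ)] with u hu
      have hu0 : (0:ℝ) < u := lt_of_lt_of_le one_pos hu
      have hz : 0 ≤ (c-1)*u := mul_nonneg (by linarith) hu0.le
      have hd := hdiag u (a*u) ((c-1)*u) (mul_nonneg ha hu0.le)
        (by nlinarith [mul_nonneg h1a.le hu0.le]) hz
      have hkey : a + (c - 1) = b * c := by
        rw [hc]; field_simp; ring
      have he1 : u + (c-1)*u = c*u := by ring
      have he2 : a*u + (c-1)*u = b*(c*u) := by linear_combination u * hkey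
      rw [he1, he2] at hd
      show ψ u (a*u)/u ≤ c * (ψ (c*u) (b*(c*u)) / (c*u))
      have heqm : c * (ψ (c*u) (b*(c*u)) / (c*u)) = ψ (c*u) (b*(c*u)) / u := by
        field_simp
      rw [heqm]
      gcongr
    have step1 : Gam ψ a ≤ c * Gam ψ b := by
      rw [hGam, hGam]
      calc limsup (F a) atTop ≤ limsup (fun u => c * F b (c*u)) atTop :=
            limsup_le_limsup hev (hCob a ha (by linarith)) (GamAux.bddAbove_of_ev
              (hevcC.mono fun u hx => mul_le_mul_of_nonneg_left hx hc0.le))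
        _ ≤ c * limsup (fun u => F b (c*u)) atTop := GamAux.limsup_cmul_le hc0 hevc0 hevcC
        _ ≤ c * limsup (F b) atTop :=
            mul_le_mul_of_nonneg_left
              (GamAux.limsup_comp_le hmc (hlb b hb0 hb1.le) (hub b hb0 hb1.le)) hc0.le
    rw [div_le_div_iff₀ h1a h1b]
    have hcb : c * (1-b) = 1 - a := by rw [hc]; field_simp
    nlinarith [mul_le_mul_of_nonneg_right step1 h1b.le, hγnn b hb0 hb1.le]
  exact ⟨⟨⟨hγ1, hγnn, hγanti, hγmul⟩, hγlip⟩, hγ0, hγratio⟩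
end

section
/- Let γ ∈ 𝓖̄_h(α) and define ψ(u,v) = u·γ(v/u) for u > 0 and ψ(0,0)=0. Then ψ ∈ 𝓑̄_h(α): in particular, ψ(u+z,v+z) ≥ ψ(u,v) for all (u,v) ∈ Δ and z ≥ 0, and ψ(u,0) − ψ(v,0) = γ(0)(u−v) ≥ h(u−v). -/
open Set Filter

/-- ratio in [0,1] -/
lemma ratio_mem01' {v u : ℝ} (hv : 0 ≤ v) (hvu : v ≤ u) : 0 ≤ v / u ∧ v / u ≤ 1 := by
  refine ⟨div_nonneg hv (hv.trans hvu), ?_⟩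
  rcases eq_or_lt_of_le (hv.trans hvu) with h0 | h0
  · have : v = 0 := le_antisymm (hvu.trans h0.symm.le) hv
    simp [this, ← h0]
  · exact (div_le_one h0).mpr hvu

/-- Lipschitz in the first variable (assuming `u ≤ u'`). -/
lemma lip_first' {α : ℝ} {γ : ℝ → ℝ} (hγ1 : γ 1 = 0)
    (hLip : ∀ a b, 0 ≤ a → a ≤ 1 → 0 ≤ b → b ≤ 1 → |γ a - γ b| ≤ α * |a - b|)
    {u u' v : ℝ} (hv : 0 ≤ v) (hvu : v ≤ u) (huu' : u ≤ u') :
    u' * γ (v / u') - u * γ (v / u) ≤ α * (u' - u) := by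
  have hγle : ∀ θ, 0 ≤ θ → θ ≤ 1 → γ θ ≤ α * (1 - θ) := by
    intro θ h0 h1
    have hl := hLip θ 1 h0 h1 zero_le_one le_rfl
    rw [hγ1, sub_zero] at hl
    have h2 : |θ - 1| = 1 - θ := by rw [abs_sub_comm]; exact abs_of_nonneg (by linarith)
    calc γ θ ≤ |γ θ| := le_abs_self _
      _ ≤ α * |θ - 1| := hl
      _ = α * (1 - θ) := by rw [h2]
  rcases eq_or_lt_of_le (hv.trans hvu) with h0 | hu
  · have hv0 : v = 0 := le_antisymm (hvu.trans h0.symm.le) hv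
    have hu0 : u = 0 := h0.symm
    subst hv0 hu0
    simp only [zero_div, zero_mul, sub_zero]
    have := hγle 0 le_rfl zero_le_one
    have hu'0 : 0 ≤ u' := huu'
    nlinarith
  · have hu' : 0 < u' := hu.trans_le huu'
    set a := v / u with ha
    set b := v / u' with hb
    obtain ⟨ha0, ha1⟩ := ratio_mem01' hv hvu
    obtain ⟨hb0, hb1⟩ := ratio_mem01' hv (hvu.trans huu')
    have hba : b ≤ a := by rw [ha, hb]; gcongr
    have hva : a * u = v := div_mul_cancel₀ v hu.ne'
    have hvb : b * u' = v := div_mul_cancel₀ v hu'.ne'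
    have e1 : γ b ≤ γ a + α * (a - b) := by
      have hl := hLip b a hb0 hb1 ha0 ha1
      have : |b - a| = a - b := by rw [abs_sub_comm]; exact abs_of_nonneg (by linarith)
      rw [this] at hl
      linarith [abs_le.mp hl]
    have e2 : γ a ≤ α * (1 - a) := hγle a ha0 ha1
    have e3 : (u' - u) * γ a ≤ (u' - u) * (α * (1 - a)) :=
      mul_le_mul_of_nonneg_left e2 (by linarith)
    have e4 : u' * γ b ≤ u' * γ a + α * (u' * a - v) := by
      have := mul_le_mul_of_nonneg_left e1 hu'.le
      have hc : u' * (α * (a - b)) = α * (u' * a - v) := by rw [← hvb]; ring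
      nlinarith [this]
    have hva' : α * (a * u) = α * v := by rw [hva]
    nlinarith [e3, e4, hva']

/-- If `γ ∈ 𝓖̄_h(α)`, then `ψ(u,v) = u·γ(v/u)` belongs to `𝓑̄_h(α)`; in particular
`ψ(u+z,v+z) ≥ ψ(u,v)` for `z ≥ 0` and `ψ(u,0) - ψ(v,0) = γ(0)(u-v) ≥ h(u-v)`. -/
theorem Gam_inv_descends (h α : ℝ) (hh : 0 ≤ h) (hhα : h ≤ α)
    (γ : ℝ → ℝ) (hγ : MemGbar h α γ) :
    MemBbar h α (fun u v => u * γ (v / u)) ∧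
    (∀ u v, 0 ≤ v → v ≤ u →
      u * γ (0 / u) - v * γ (0 / v) = γ 0 * (u - v) ∧
      h * (u - v) ≤ γ 0 * (u - v)) := by
  obtain ⟨⟨⟨hγ1, hγnn, hγdec, hγsub⟩, hLip⟩, hγ0, hRatio⟩ := hγ
  -- monotone in first variable
  have hmono1 : ∀ u w v : ℝ, 0 ≤ v → v ≤ w → w ≤ u → w * γ (v / w) ≤ u * γ (v / u) := by
    intro u w v hv hvw hwu
    rcases eq_or_lt_of_le (hv.trans hvw) with h0 | hw
    · have hv0 : v = 0 := le_antisymm (hvw.trans h0.symm.le) hv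
      have hw0 : w = 0 := h0.symm
      subst hv0 hw0
      simp only [zero_div, zero_mul]
      exact mul_nonneg hwu (hγnn 0 le_rfl zero_le_one)
    · have hu : 0 < u := hw.trans_le hwu
      have hle : v / u ≤ v / w := by gcongr
      have hg : γ (v / w) ≤ γ (v / u) :=
        hγdec (v / u) (v / w) (ratio_mem01' hv (hvw.trans hwu)).1 hle (ratio_mem01' hv hvw).2
      calc w * γ (v / w) ≤ u * γ (v / w) :=
            mul_le_mul_of_nonneg_right hwu (hγnn _ (ratio_mem01' hv hvw).1 (ratio_mem01' hv hvw).2)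
        _ ≤ u * γ (v / u) := mul_le_mul_of_nonneg_left hg hu.le
  -- Lipschitz (one-sided in u already done via lip_first'); in v:
  have hlipv : ∀ u v v' : ℝ, 0 ≤ v → v ≤ u → 0 ≤ v' → v' ≤ u →
      |u * γ (v / u) - u * γ (v' / u)| ≤ α * |v - v'| := by
    intro u v v' hv hvu hv' hv'u
    rcases eq_or_lt_of_le (hv.trans hvu) with h0 | hu
    · have hv0 : v = 0 := le_antisymm (hvu.trans h0.symm.le) hv
      have hv'0 : v' = 0 := le_antisymm (hv'u.trans h0.symm.le) hv'
      subst hv0 hv'0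
      simp [← h0]
    · have hl := hLip (v / u) (v' / u) (ratio_mem01' hv hvu).1 (ratio_mem01' hv hvu).2
        (ratio_mem01' hv' hv'u).1 (ratio_mem01' hv' hv'u).2
      have key : |u * γ (v / u) - u * γ (v' / u)| = u * |γ (v / u) - γ (v' / u)| := by
        rw [← mul_sub, abs_mul, abs_of_pos hu]
      have hd : |v / u - v' / u| = |v - v'| / u := by
        rw [div_sub_div_same, abs_div, abs_of_pos hu]
      rw [key]
      calc u * |γ (v / u) - γ (v' / u)| ≤ u * (α * (|v - v'| / u)) := by
            rw [← hd]; exact mul_le_mul_of_nonneg_left hl hu.le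
        _ = α * |v - v'| := by field_simp
  have hlipu : ∀ u u' v : ℝ, 0 ≤ v → v ≤ u → v ≤ u' →
      |u * γ (v / u) - u' * γ (v / u')| ≤ α * |u - u'| := by
    intro u u' v hv hvu hvu'
    rcases le_total u u' with hc | hc
    · rw [abs_sub_comm, abs_of_nonneg (by linarith [hmono1 u' u v hv hvu hc] : (0:ℝ) ≤ u' * γ (v/u') - u * γ (v/u))]
      rw [abs_sub_comm, abs_of_nonneg (by linarith : (0:ℝ) ≤ u' - u)]
      exact lip_first' hγ1 hLip hv hvu hc
    · rw [abs_of_nonneg (by linarith [hmono1 u u' v hv hvu' hc] : (0:ℝ) ≤ u * γ (v/u) - u' * γ (v/u'))]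
      rw [abs_of_nonneg (by linarith : (0:ℝ) ≤ u - u')]
      exact lip_first' hγ1 hLip hv hvu' hc
  refine ⟨⟨⟨⟨?_, ?_, ?_, ?_, ?_⟩, ?_⟩, ?_, ?_⟩, ?_⟩
  · -- ψ u u = 0
    intro u hu
    rcases eq_or_lt_of_le hu with h0 | h0
    · simp [← h0]
    · simp [div_self h0.ne', hγ1]
  · -- nonneg
    intro u v hv hvu
    exact mul_nonneg (hv.trans hvu) (hγnn _ (ratio_mem01' hv hvu).1 (ratio_mem01' hv hvu).2)
  · -- subadditive
    intro u w v hv hvw hwu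
    simp only
    rcases eq_or_lt_of_le (hv.trans hvw) with h0 | hw
    · have hv0 : v = 0 := le_antisymm (hvw.trans h0.symm.le) hv
      have hw0 : w = 0 := h0.symm
      subst hv0 hw0
      simp only [zero_div, zero_mul, add_zero, le_refl]
    · have hu : 0 < u := hw.trans_le hwu
      have hlt : (v / w) * (w / u) = v / u := by
        rw [div_mul_div_comm, mul_comm w u, mul_div_mul_right _ _ hw.ne']
      have key := hγsub (v / w) (w / u) (ratio_mem01' hv hvw).1 (ratio_mem01' hv hvw).2
        (ratio_mem01' hw.le hwu).1 (ratio_mem01' hw.le hwu).2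
      rw [hlt] at key
      have := mul_le_mul_of_nonneg_left key hu.le
      have hc2 : u * (w / u * γ (v / w)) = w * γ (v / w) := by
        rw [← mul_assoc, mul_div_cancel₀ w hu.ne']
      linarith [this, hc2, mul_add u (γ (w / u)) (w / u * γ (v / w))]
  · -- monotone in first
    intro u w v hv hvw hwu
    exact hmono1 u w v hv hvw hwu
  · -- antitone in second
    intro u w v hv hvw hwu
    simp only
    rcases eq_or_lt_of_le ((hv.trans hvw).trans hwu) with h0 | hu
    · simp [← h0]
    · have hle : v / u ≤ w / u := by gcongr
      exact mul_le_mul_of_nonneg_left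
        (hγdec (v / u) (w / u) (ratio_mem01' hv ((hvw.trans hwu))).1 hle
          (ratio_mem01' (hv.trans hvw) hwu).2) hu.le
  · -- Lipschitz
    intro u v u' v' hv hvu hv' hv'u'
    simp only
    rcases le_total u u' with hc | hc
    · calc |u * γ (v / u) - u' * γ (v' / u')|
          ≤ |u * γ (v / u) - u' * γ (v / u')| + |u' * γ (v / u') - u' * γ (v' / u')| :=
            abs_sub_le _ _ _
        _ ≤ α * |u - u'| + α * |v - v'| := by
            gcongr
            · exact hlipu u u' v hv hvu (hvu.trans hc)
            · exact hlipv u' v v' hv (hvu.trans hc) hv' hv'u'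
        _ = α * (|u - u'| + |v - v'|) := by ring
    · calc |u * γ (v / u) - u' * γ (v' / u')|
          ≤ |u * γ (v / u) - u * γ (v' / u)| + |u * γ (v' / u) - u' * γ (v' / u')| :=
            abs_sub_le _ _ _
        _ ≤ α * |v - v'| + α * |u - u'| := by
            gcongr
            · exact hlipv u v v' hv hvu hv' (hv'u'.trans hc)
            · exact hlipu u u' v' hv' (hv'u'.trans hc) hv'u'
        _ = α * (|u - u'| + |v - v'|) := by ring
  · -- diagonal monotonicity
    intro u v z hv hvu hz
    simp only
    rcases eq_or_lt_of_le hvu with heq | hlt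
    · -- u = v
      subst heq
      have hL : v * γ (v / v) = 0 := by
        rcases eq_or_lt_of_le hv with h0 | h0
        · simp [← h0]
        · simp [div_self h0.ne', hγ1]
      have hR : 0 ≤ (v + z) * γ ((v + z) / (v + z)) :=
        mul_nonneg (by linarith)
          (hγnn _ (ratio_mem01' (by linarith) le_rfl).1 (ratio_mem01' (by linarith) le_rfl).2)
      linarith
    · have hu : 0 < u := hv.trans_lt hlt
      have huz : 0 < u + z := by linarith
      set a := v / u with ha
      set b := (v + z) / (u + z) with hb
      obtain ⟨ha0, ha1⟩ := ratio_mem01' hv hvu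
      obtain ⟨hb0, hb1⟩ := ratio_mem01' (by linarith : (0:ℝ) ≤ v + z) (by linarith : v + z ≤ u + z)
      have hab : a ≤ b := by
        rw [ha, hb, div_le_div_iff₀ hu huz]
        nlinarith
      have hb1' : b < 1 := by
        rw [hb, div_lt_one huz]; linarith
      have key := hRatio a b ha0 hab hb1'
      have h1a : 0 < 1 - a := by
        have : a < 1 := by rw [ha, div_lt_one hu]; exact hlt
        linarith
      have h1b : 0 < 1 - b := by linarith
      have key2 : γ a * (1 - b) ≤ γ b * (1 - a) := (div_le_div_iff₀ h1a h1b).mp key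
      have e1 : (u + z) * (1 - b) = u - v := by
        rw [hb]; field_simp; ring
      have e2 : u * (1 - a) = u - v := by
        rw [ha]; field_simp
      have final : u * γ a * (u - v) ≤ (u + z) * γ b * (u - v) := by
        calc u * γ a * (u - v) = u * γ a * ((u + z) * (1 - b)) := by rw [e1]
          _ = (u * (u + z)) * (γ a * (1 - b)) := by ring
          _ ≤ (u * (u + z)) * (γ b * (1 - a)) :=
              mul_le_mul_of_nonneg_left key2 (by positivity)
          _ = (u + z) * γ b * (u * (1 - a)) := by ring
          _ = (u + z) * γ b * (u - v) := by rw [e2]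
      exact le_of_mul_le_mul_right final (by linarith)
  · -- bottom edge
    intro u v hv hvu
    simp only [zero_div]
    have : u * γ 0 - v * γ 0 = γ 0 * (u - v) := by ring
    rw [this]
    exact mul_le_mul_of_nonneg_right hγ0 (by linarith)
  · -- in particular
    intro u v hv hvu
    constructor
    · simp only [zero_div]; ring
    · exact mul_le_mul_of_nonneg_right hγ0 (by linarith)
end

section
/- Let γ : [0,1] → [0,∞) be decreasing and α-Lipschitz with γ(1)=0, γ(0) ≥ h, and suppose θ ↦ γ(θ)/(1−θ) is increasing on [0,1). Then γ satisfies the subadditivity inequality γ(λθ) ≤ γ(θ) + θγ(λ) for all λ, θ ∈ [0,1]; that is, 𝓖̄_h(α) ⊂ 𝓖(α). -/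
open Set

/-!
Write `γ θ = (1 - θ) g θ` with `g θ = γ θ / (1 - θ)` monotone on `[0, 1)`. Splitting
`1 - λθ = (1 - θ) + θ (1 - λ)` and using `g (λθ) ≤ g θ`, `g (λθ) ≤ g λ` (as `λθ ≤ min λ θ`) gives
`γ (λθ) ≤ (1 - θ) g θ + θ (1 - λ) g λ = γ θ + θ γ λ`. The endpoints `λ = 1`, `θ = 1` follow from
`γ 1 = 0`.
-/

theorem apply_mul_le_of_monotoneOn_div_one_sub {γ : ℝ → ℝ}
    (hg : MonotoneOn (fun x => γ x / (1 - x)) (Ico 0 1)) {lam θ : ℝ}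
    (hlam : lam ∈ Ico 0 1) (hθ : θ ∈ Ico 0 1) :
    γ (lam * θ) ≤ γ θ + θ * γ lam := by
  set g := fun x => γ x / (1 - x)
  have hγ : ∀ x < 1, γ x = (1 - x) * g x := fun x hx => by
    simp only [g]; field_simp [(sub_pos.2 hx).ne']
  have hmem : lam * θ ∈ Ico 0 1 :=
    ⟨mul_nonneg hlam.1 hθ.1, lt_of_le_of_lt (mul_le_of_le_one_right hlam.1 hθ.2.le) hlam.2⟩
  have hg_lam : g (lam * θ) ≤ g lam := hg hmem hlam (mul_le_of_le_one_right hlam.1 hθ.2.le)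
  have hg_θ : g (lam * θ) ≤ g θ := hg hmem hθ (mul_le_of_le_one_left hθ.1 hlam.2.le)
  have h1θ : 0 ≤ 1 - θ := sub_nonneg.2 hθ.2.le
  have h1lam : 0 ≤ 1 - lam := sub_nonneg.2 hlam.2.le
  calc γ (lam * θ) = (1 - θ) * g (lam * θ) + θ * (1 - lam) * g (lam * θ) := by
        rw [hγ _ hmem.2]; ring
    _ ≤ (1 - θ) * g θ + θ * (1 - lam) * g lam := by
        gcongr
        exact mul_nonneg hθ.1 h1lam
    _ = γ θ + θ * γ lam := by rw [hγ θ hθ.2, hγ lam hlam.2]; ring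

theorem Gbar_subset_G_general (γ : ℝ → ℝ)
    (hγ1 : γ 1 = 0)
    (hratio : ∀ a b : ℝ, 0 ≤ a → a ≤ b → b < 1 → γ a / (1 - a) ≤ γ b / (1 - b)) :
    ∀ lam θ : ℝ, 0 ≤ lam → lam ≤ 1 → 0 ≤ θ → θ ≤ 1 →
      γ (lam * θ) ≤ γ θ + θ * γ lam := by
  intro lam θ hl0 hl1 hθ0 hθ1
  rcases hθ1.eq_or_lt with rfl | hθ1
  · simp [hγ1]
  rcases hl1.eq_or_lt with rfl | hl1
  · simp [hγ1]
  exact apply_mul_le_of_monotoneOn_div_one_sub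
    (fun a ha b hb hab => hratio a b ha.1 hab hb.2) ⟨hl0, hl1⟩ ⟨hθ0, hθ1⟩

/-- If `γ : [0,1] → [0,∞)` is decreasing, `α`-Lipschitz, with `γ(1)=0`, `γ(0) ≥ h`, and
`θ ↦ γ(θ)/(1-θ)` increasing on `[0,1)`, then `γ` satisfies the subadditivity
`γ(λθ) ≤ γ(θ) + θγ(λ)` for all `λ, θ ∈ [0,1]`; i.e. `𝓖̄_h(α) ⊂ 𝓖(α)`. -/
theorem Gbar_subset_G (h α : ℝ) (hh : 0 ≤ h) (hhα : h ≤ α) (γ : ℝ → ℝ)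
    (hγ1 : γ 1 = 0) (hγ0 : h ≤ γ 0)
    (hpos : ∀ θ : ℝ, 0 ≤ θ → θ ≤ 1 → 0 ≤ γ θ)
    (hdec : ∀ a b : ℝ, 0 ≤ a → a ≤ b → b ≤ 1 → γ b ≤ γ a)
    (hlip : ∀ a b : ℝ, 0 ≤ a → a ≤ 1 → 0 ≤ b → b ≤ 1 → |γ a - γ b| ≤ α * |a - b|)
    (hratio : ∀ a b : ℝ, 0 ≤ a → a ≤ b → b < 1 → γ a / (1 - a) ≤ γ b / (1 - b)) :
    ∀ lam θ : ℝ, 0 ≤ lam → lam ≤ 1 → 0 ≤ θ → θ ≤ 1 →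
      γ (lam * θ) ≤ γ θ + θ * γ lam :=
  Gbar_subset_G_general γ hγ1 hratio
end
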